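/- arXiv:1409.6227 — 13 statements merged into one kernel-verified Lean document; each statement's English description precedes it below -/
import Mathlib

section
/- Let F be a field and d, k natural numbers with k + 1 ≤ d. Let ℋ be a set of submodules of the vector space Fin (d+1) → F, each member having finrank k+1. If for every submodule W of Fin (d+1) → F with finrank W = d − k there exists H ∈ ℋ such that H ⊓ W = ⊥, then ℋ is a generator set with respect to co-k-subspaces, i.e. for every submodule Π with finrank Π = d + 1 − k one has ⨆_{H ∈ ℋ} (H ⊓ Π) = Π. -/
open Module

lemma aux_extend {F V : Type*} [Field F] [AddCommGroup V] [Module F V]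
    [FiniteDimensional F V] :
    ∀ n (S : Submodule F V), finrank F S ≤ n → n ≤ finrank F V →
      ∃ W : Submodule F V, S ≤ W ∧ finrank F W = n := by
  intro n
  induction n with
  | zero => exact fun S hS _ => ⟨S, le_rfl, Nat.le_zero.mp hS⟩
  | succ n ih =>
    intro S hS hn
    rcases eq_or_lt_of_le hS with h | h
    · exact ⟨S, le_rfl, h⟩
    · obtain ⟨W', hSW', hW'⟩ := ih S (Nat.lt_succ_iff.mp h) (le_of_lt hn)
      have hlt : finrank F W' < finrank F V := hW' ▸ hn
      obtain ⟨x, hx⟩ := W'.exists_of_finrank_lt hlt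
      have hxW' : x ∉ W' := by simpa using hx 1 one_ne_zero
      have hx0 : x ≠ 0 := fun h => hxW' (h ▸ W'.zero_mem)
      refine ⟨W' ⊔ F ∙ x, hSW'.trans le_sup_left, ?_⟩
      have hinf : W' ⊓ (F ∙ x) = ⊥ :=
        disjoint_iff.mp (Submodule.disjoint_span_singleton.mpr fun h => absurd h hxW')
      have := Submodule.finrank_sup_add_finrank_inf_eq W' (F ∙ x)
      rw [hinf, hW', finrank_span_singleton hx0] at this
      simpa using this

theorem stmt_0 (F : Type*) [Field F] (d k : ℕ) (hkd : k + 1 ≤ d)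
    (ℋ : Set (Submodule F (Fin (d + 1) → F)))
    (hrank : ∀ H ∈ ℋ, finrank F H = k + 1)
    (hblock : ∀ W : Submodule F (Fin (d + 1) → F), finrank F W = d - k →
      ∃ H ∈ ℋ, H ⊓ W = ⊥) :
    ∀ P : Submodule F (Fin (d + 1) → F), finrank F P = d + 1 - k →
      (⨆ H ∈ ℋ, H ⊓ P) = P := by
  intro P hP
  set S : Submodule F (Fin (d + 1) → F) := ⨆ H ∈ ℋ, H ⊓ P with hSdef
  have hSP : S ≤ P := iSup₂_le fun H _ => inf_le_right
  by_contra hne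
  have hlt : S < P := lt_of_le_of_ne hSP hne
  have hV : finrank F (Fin (d + 1) → F) = d + 1 := by simp
  have hfr : finrank F S < finrank F P := Submodule.finrank_lt_finrank_of_lt hlt
  have hSle : finrank F S ≤ d - k := by omega
  obtain ⟨W, hSW, hW⟩ := aux_extend (d - k) S hSle (by omega)
  obtain ⟨H, hH, hHW⟩ := hblock W hW
  have hHP : H ⊓ P ≤ S := le_iSup₂_of_le H hH le_rfl
  have hbot : H ⊓ P = ⊥ := by
    rw [← le_bot_iff, ← hHW]
    exact le_inf inf_le_left (hHP.trans hSW)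
  have hsum := Submodule.finrank_sup_add_finrank_inf_eq H P
  rw [hbot, hrank H hH, hP] at hsum
  have hle : finrank F ↥(H ⊔ P) ≤ d + 1 := le_trans (Submodule.finrank_le (H ⊔ P)) (le_of_eq hV)
  simp only [finrank_bot] at hsum
  omega
end

section
/- Let F be a field and d, k natural numbers with 1 ≤ k and k + 1 ≤ d. Let ℋ be a set of submodules of Fin (d+1) → F, each of finrank k+1, which is a generator set with respect to co-k-subspaces (for every submodule Π of finrank d+1−k, ⨆_{H ∈ ℋ} (H ⊓ Π) = Π). Suppose there exists a submodule W with finrank W = d − k such that H ⊓ W ≠ ⊥ for every H ∈ ℋ. Then, if ℋ is a finite set, the field F is finite and Set.ncard ℋ ≥ Nat.card F + 1 (in particular, if F is infinite then ℋ must be infinite). -/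
/-! The subspaces `H ⊔ W`, `H ∈ ℋ`, are proper, since `H ⊓ W ≠ ⊥` while the dimensions of `H` and
`W` add up to `d + 1`. They cover the whole space: for `v ∉ W`, the generator property for
`Π = W ⊔ ⟨v⟩` yields some `H` with `H ⊓ Π ⊄ W`, and by the modular law this forces `v ∈ H ⊔ W`.
A vector space over an infinite field is not a finite union of proper subspaces, and over `𝔽_q`
each proper subspace of an `n`-dimensional space has at most `q^(n-1) - 1` nonzero vectors, while
`q (q^(n-1) - 1) < q^n - 1`. -/

open Module

theorem Nat.add_one_le_of_mul_sub_one_le_mul_sub_one {q m r : ℕ} (hq : 2 ≤ q) (hr : 1 ≤ r)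
    (h : q * r - 1 ≤ m * (r - 1)) : q + 1 ≤ m := by
  by_contra! hm
  obtain ⟨r, rfl⟩ := Nat.exists_eq_add_of_le' hr
  have : m * r ≤ q * r := Nat.mul_le_mul_right r (by omega)
  simp only [Nat.add_sub_cancel, Nat.mul_add, mul_one] at h
  omega

section Covering

variable {K V ι : Type*} [DivisionRing K] [AddCommGroup V] [Module K V] [FiniteDimensional K V]

theorem Subspace.card_add_one_le_of_biUnion_eq_univ [Finite K] {t : Finset ι}
    {p : ι → Submodule K V} (hp : ∀ i ∈ t, p i ≠ ⊤)
    (hcover : ⋃ i ∈ t, (p i : Set V) = Set.univ) :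
    Nat.card K + 1 ≤ t.card := by
  have : Finite V := Module.finite_of_finite K
  obtain ⟨i₀, hi₀, -⟩ := Set.mem_iUnion₂.1 (hcover.symm ▸ Set.mem_univ (0 : V))
  have hn : 1 ≤ finrank K V := (Submodule.finrank_lt (hp i₀ hi₀)).trans_le' (Nat.zero_le _)
  have hq : 2 ≤ Nat.card K := Finite.one_lt_card
  have hcard_p : ∀ i ∈ t, ((p i : Set V) \ {0}).ncard ≤ Nat.card K ^ (finrank K V - 1) - 1 := by
    intro i hi
    rw [Set.ncard_sdiff_singleton_of_mem (p i).zero_mem, ← Nat.card_coe_set_eq,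
      SetLike.coe_sort_coe, Module.natCard_eq_pow_finrank (K := K) (V := p i)]
    have := Submodule.finrank_lt (hp i hi)
    gcongr <;> omega
  have hcount : Nat.card K ^ finrank K V - 1 ≤ t.card * (Nat.card K ^ (finrank K V - 1) - 1) :=
    calc Nat.card K ^ finrank K V - 1 = (Set.univ \ {(0 : V)}).ncard := by
          rw [Set.ncard_sdiff_singleton_of_mem (Set.mem_univ _), Set.ncard_univ,
            Module.natCard_eq_pow_finrank (K := K) (V := V)]
      _ = (⋃ i ∈ t, (p i : Set V) \ {0}).ncard := by
          rw [← hcover]; simp only [Set.iUnion_sdiff]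
      _ ≤ ∑ i ∈ t, ((p i : Set V) \ {0}).ncard := t.set_ncard_biUnion_le _
      _ ≤ t.card * (Nat.card K ^ (finrank K V - 1) - 1) := by
          simpa only [Finset.sum_const, smul_eq_mul] using Finset.sum_le_sum hcard_p
  refine Nat.add_one_le_of_mul_sub_one_le_mul_sub_one hq
    (Nat.one_le_pow (finrank K V - 1) (Nat.card K) (by omega)) ?_
  rwa [← pow_succ', Nat.sub_add_cancel hn]

theorem Subspace.finite_and_card_add_one_le_of_biUnion_eq_univ {t : Finset ι}
    {p : ι → Submodule K V} (hp : ∀ i ∈ t, p i ≠ ⊤)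
    (hcover : ⋃ i ∈ t, (p i : Set V) = Set.univ) :
    Finite K ∧ Nat.card K + 1 ≤ t.card := by
  have : Finite K := by
    by_contra hK
    have : Infinite K := not_finite_iff_infinite.1 hK
    obtain ⟨⟨i, hi⟩, hi_top⟩ := Subspace.exists_eq_top_of_iUnion_eq_univ
      (p := fun i : t => p i) (by rwa [Set.iUnion_subtype])
    exact hp i hi hi_top
  exact ⟨this, Subspace.card_add_one_le_of_biUnion_eq_univ hp hcover⟩

end Covering

namespace Submodule

variable {K V : Type*} [DivisionRing K] [AddCommGroup V] [Module K V]

theorem exists_mem_sup_of_iSup_inf_eq {ℋ : Set (Submodule K V)} {W : Submodule K V} {v : V}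
    (hv : v ∉ W) (h : ⨆ H ∈ ℋ, H ⊓ (W ⊔ K ∙ v) = W ⊔ K ∙ v) : ∃ H ∈ ℋ, v ∈ H ⊔ W := by
  by_contra! hno
  refine hv ((?_ : W ⊔ K ∙ v ≤ W) (mem_sup_right (mem_span_singleton_self v)))
  rw [← h]
  refine iSup₂_le fun H hH => ?_
  -- modular law, with `K ∙ v` disjoint from `H ⊔ W`
  calc H ⊓ (W ⊔ K ∙ v) ≤ (W ⊔ K ∙ v) ⊓ (W ⊔ H) := by
        rw [inf_comm]
        exact inf_le_inf_left _ le_sup_right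
    _ = W := by
        rw [sup_inf_assoc_of_le _ le_sup_left, sup_comm W H,
          (disjoint_span_singleton_of_notMem (hno H hH)).symm.eq_bot, sup_bot_eq]

theorem sup_ne_top_of_inf_ne_bot [FiniteDimensional K V] {H W : Submodule K V}
    (hrank : finrank K H + finrank K W ≤ finrank K V) (hHW : H ⊓ W ≠ ⊥) : H ⊔ W ≠ ⊤ := by
  intro htop
  have hsum := finrank_sup_add_finrank_inf_eq H W
  have hinf : finrank K ↥(H ⊓ W) ≠ 0 := finrank_eq_zero.not.mpr hHW
  rw [htop, finrank_top] at hsum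
  omega

end Submodule

theorem stmt_1_general (F : Type*) [Field F] (d k : ℕ) (hkd : k + 1 ≤ d)
    (ℋ : Set (Submodule F (Fin (d + 1) → F)))
    (hrank : ∀ H ∈ ℋ, finrank F H = k + 1)
    (hgen : ∀ P : Submodule F (Fin (d + 1) → F), finrank F P = d + 1 - k →
      (⨆ H ∈ ℋ, H ⊓ P) = P)
    (hW : ∃ W : Submodule F (Fin (d + 1) → F), finrank F W = d - k ∧
      ∀ H ∈ ℋ, H ⊓ W ≠ ⊥)
    (hfin : ℋ.Finite) :
    Finite F ∧ Nat.card F + 1 ≤ Set.ncard ℋ := by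
  obtain ⟨W, hW_rank, hW_meets⟩ := hW
  have hV : finrank F (Fin (d + 1) → F) = d + 1 := finrank_fin_fun F
  have hcover_notMem : ∀ v ∉ W, ∃ H ∈ ℋ, v ∈ H ⊔ W := fun v hv =>
    Submodule.exists_mem_sup_of_iSup_inf_eq hv <| hgen _ <| by
      rw [Submodule.finrank_sup_span_singleton hv, hW_rank]
      omega
  have hW_top : W ≠ ⊤ := fun h => by
    rw [h, finrank_top, hV] at hW_rank
    omega
  obtain ⟨v₀, -, hv₀⟩ := SetLike.exists_of_lt (lt_top_iff_ne_top.2 hW_top)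
  obtain ⟨H₀, hH₀, -⟩ := hcover_notMem v₀ hv₀
  have hcover : ⋃ H ∈ hfin.toFinset, ((H ⊔ W : Submodule F _) : Set (Fin (d + 1) → F)) =
      Set.univ := by
    refine Set.eq_univ_of_forall fun v => ?_
    simp only [Set.mem_iUnion, Set.Finite.mem_toFinset, SetLike.mem_coe, exists_prop]
    by_cases hv : v ∈ W
    · exact ⟨H₀, hH₀, Submodule.mem_sup_right hv⟩
    · exact hcover_notMem v hv
  have hproper : ∀ H ∈ hfin.toFinset, H ⊔ W ≠ ⊤ := fun H hH => by
    rw [Set.Finite.mem_toFinset] at hH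
    refine Submodule.sup_ne_top_of_inf_ne_bot ?_ (hW_meets H hH)
    rw [hrank H hH, hW_rank, hV]
    omega
  rw [Set.ncard_eq_toFinset_card ℋ hfin]
  exact Subspace.finite_and_card_add_one_le_of_biUnion_eq_univ hproper hcover

theorem stmt_1 (F : Type*) [Field F] (d k : ℕ) (hk : 1 ≤ k) (hkd : k + 1 ≤ d)
    (ℋ : Set (Submodule F (Fin (d + 1) → F)))
    (hrank : ∀ H ∈ ℋ, finrank F H = k + 1)
    (hgen : ∀ P : Submodule F (Fin (d + 1) → F), finrank F P = d + 1 - k →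
      (⨆ H ∈ ℋ, H ⊓ P) = P)
    (hW : ∃ W : Submodule F (Fin (d + 1) → F), finrank F W = d - k ∧
      ∀ H ∈ ℋ, H ⊓ W ≠ ⊥)
    (hfin : ℋ.Finite) :
    Finite F ∧ Nat.card F + 1 ≤ Set.ncard ℋ :=
  stmt_1_general F d k hkd ℋ hrank hgen hW hfin
end

section
/- Let F be a field, m, s, A, N natural numbers with s ≤ m, and let H : Fin N → Submodule F (Fin m → F) be a family with finrank (H i) = m − s for every i. Assume that for every submodule W of Fin m → F with finrank W = s, the number of indices i with H i ⊓ W ≠ ⊥ is at most A (i.e. the family is an (m−s)-uniform weak (s,A) subspace design). Then the family of dual annihilators i ↦ (H i).dualAnnihilator, each a submodule of Module.Dual F (Fin m → F) of finrank s, is an s-uniform weak (m−s,A) subspace design: for every submodule V of Module.Dual F (Fin m → F) with finrank V = m − s, the number of indices i with (H i).dualAnnihilator ⊓ V ≠ ⊥ is at most A. -/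
open Module

theorem stmt_3 (F : Type*) [Field F] (m s A N : ℕ) (hsm : s ≤ m)
    (H : Fin N → Submodule F (Fin m → F))
    (hrank : ∀ i, finrank F (H i) = m - s)
    (hweak : ∀ W : Submodule F (Fin m → F), finrank F W = s →
      Set.ncard {i : Fin N | H i ⊓ W ≠ ⊥} ≤ A) :
    (∀ i, finrank F ((H i).dualAnnihilator) = s) ∧
    ∀ V : Submodule F (Module.Dual F (Fin m → F)), finrank F V = m - s →
      Set.ncard {i : Fin N | (H i).dualAnnihilator ⊓ V ≠ ⊥} ≤ A := by
  have hm : finrank F (Fin m → F) = m := by simp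
  have hann : ∀ X : Submodule F (Fin m → F),
      finrank F X.dualAnnihilator = m - finrank F X := by
    intro X
    have h1 : finrank F ((Fin m → F) ⧸ X) = finrank F X.dualAnnihilator :=
      (Subspace.quotEquivAnnihilator X).finrank_eq
    have h2 := Submodule.finrank_quotient_add_finrank X
    rw [hm] at h2
    omega
  constructor
  · intro i
    rw [hann, hrank i, Nat.sub_sub_self hsm]
  · intro V hV
    set W := V.dualCoannihilator with hW
    have hsum := Subspace.finrank_add_finrank_dualCoannihilator_eq V
    rw [hm, hV] at hsum
    have hWrank : finrank F W = s := by rw [hW]; omega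
    have key : {i : Fin N | (H i).dualAnnihilator ⊓ V ≠ ⊥}
        = {i : Fin N | H i ⊓ W ≠ ⊥} := by
      ext i
      simp only [Set.mem_setOf_eq, not_iff_not]
      have hVW : W.dualAnnihilator = V := Subspace.dualCoannihilator_dualAnnihilator_eq
      rw [← hVW, ← Submodule.dualAnnihilator_sup_eq]
      constructor
      · intro h
        have hsup : H i ⊔ W = ⊤ := by
          rw [← Subspace.dualAnnihilator_inj, h, Submodule.dualAnnihilator_top]
        have := Submodule.finrank_sup_add_finrank_inf_eq (H i) W
        rw [hsup, hrank i, hWrank, finrank_top, hm] at this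
        have : finrank F (H i ⊓ W : Submodule F (Fin m → F)) = 0 := by omega
        exact Submodule.finrank_eq_zero.mp this
      · intro h
        have := Submodule.finrank_sup_add_finrank_inf_eq (H i) W
        rw [h, hrank i, hWrank, finrank_bot] at this
        have hsup : H i ⊔ W = ⊤ := by
          apply Submodule.eq_top_of_finrank_eq
          rw [hm]; omega
        rw [hsup, Submodule.dualAnnihilator_top]
    rw [key]
    exact hweak W hWrank
end

section
/- Let F be a field, d, k, N, A natural numbers with k + 1 ≤ d, and let H : Fin N → Submodule F (Fin (d+1) → F) be a family with finrank (H i) = k + 1 for every i, which is a (k+1)-uniform weak (d−k, A) subspace design: for every submodule W with finrank W = d − k, the number of indices i with H i ⊓ W ≠ ⊥ is at most A. Then every subfamily of at least A+1 members is a set of higgledy-piggledy k-subspaces: for every finite set S of indices with A + 1 ≤ S.card and every submodule Π with finrank Π = d + 1 − k, one has ⨆_{i ∈ S} (H i ⊓ Π) = Π. -/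
open Module

lemma aux_exists_between (F : Type*) [Field F] {V : Type*} [AddCommGroup V] [Module F V]
    [FiniteDimensional F V] (T P : Submodule F V) (hTP : T ≤ P) (n : ℕ)
    (h1 : finrank F T ≤ n) (h2 : n ≤ finrank F P) :
    ∃ W : Submodule F V, T ≤ W ∧ W ≤ P ∧ finrank F W = n := by
  obtain ⟨m, rfl⟩ := Nat.exists_eq_add_of_le h1
  clear h1
  induction m with
  | zero => exact ⟨T, le_rfl, hTP, by omega⟩
  | succ m ih =>
    obtain ⟨W, hTW, hWP, hW⟩ := ih (by omega)
    have hWltP : W < P := by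
      refine lt_of_le_of_ne hWP ?_
      rintro rfl
      omega
    obtain ⟨x, hxP, hxW⟩ := SetLike.exists_of_lt hWltP
    refine ⟨W ⊔ F ∙ x, hTW.trans le_sup_left, sup_le hWP ?_, ?_⟩
    · rwa [Submodule.span_singleton_le_iff_mem]
    · have hx0 : x ≠ 0 := fun h => hxW (h ▸ W.zero_mem)
      have hinf : W ⊓ (F ∙ x) = ⊥ := by
        rw [eq_bot_iff]
        rintro y ⟨hyW, hyx⟩
        obtain ⟨c, rfl⟩ := Submodule.mem_span_singleton.mp hyx
        rcases eq_or_ne c 0 with rfl | hc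
        · simp
        · exact absurd (by simpa [smul_smul, inv_mul_cancel₀ hc] using W.smul_mem c⁻¹ hyW) hxW
      have := Submodule.finrank_sup_add_finrank_inf_eq W (F ∙ x)
      rw [hinf, finrank_bot, finrank_span_singleton hx0] at this
      omega

theorem stmt_4 (F : Type*) [Field F] (d k N A : ℕ) (hkd : k + 1 ≤ d)
    (H : Fin N → Submodule F (Fin (d + 1) → F))
    (hrank : ∀ i, finrank F (H i) = k + 1)
    (hweak : ∀ W : Submodule F (Fin (d + 1) → F), finrank F W = d - k →
      Set.ncard {i : Fin N | H i ⊓ W ≠ ⊥} ≤ A) :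
    ∀ S : Finset (Fin N), A + 1 ≤ S.card →
      ∀ P : Submodule F (Fin (d + 1) → F), finrank F P = d + 1 - k →
        (⨆ i ∈ S, H i ⊓ P) = P := by
  intro S hS P hP
  set T : Submodule F (Fin (d + 1) → F) := ⨆ i ∈ S, H i ⊓ P with hT
  have hTP : T ≤ P := iSup₂_le fun i _ => inf_le_right
  by_contra hne
  have hlt : T < P := lt_of_le_of_ne hTP hne
  have hamb : finrank F (Fin (d + 1) → F) = d + 1 := by
    simp [Module.finrank_pi]
  have hTlt : finrank F T < finrank F P := Submodule.finrank_lt_finrank_of_lt hlt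
  obtain ⟨W, hTW, hWP, hW⟩ := aux_exists_between F T P hTP (d - k)
    (by omega) (by omega)
  have hsub : (↑S : Set (Fin N)) ⊆ {i : Fin N | H i ⊓ W ≠ ⊥} := by
    intro i hi
    have hiP : H i ⊓ P ≠ ⊥ := by
      have hd := Submodule.finrank_sup_add_finrank_inf_eq (H i) P
      have hle : finrank F ↥(H i ⊔ P) ≤ d + 1 := by
        have := Submodule.finrank_le (H i ⊔ P)
        rwa [hamb] at this
      intro hbot
      rw [hbot, finrank_bot, hrank, hP] at hd
      omega
    have hle1 : H i ⊓ P ≤ H i ⊓ W := by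
      refine le_inf inf_le_left ?_
      exact le_trans (le_trans (le_iSup₂ (f := fun j _ => H j ⊓ P) i hi) le_rfl) hTW
    intro hbot
    exact hiP (le_bot_iff.mp (hbot ▸ hle1))
  have hcard : S.card ≤ Set.ncard {i : Fin N | H i ⊓ W ≠ ⊥} := by
    rw [← Set.ncard_coe_finset]
    exact Set.ncard_le_ncard hsub (Set.toFinite _)
  have := hweak W hW
  omega
end

section
/- Let F be a field, d, k, N, A natural numbers with 1 ≤ k, k + 1 ≤ d, and (A : Cardinal) < Cardinal.mk F. Let H : Fin N → Submodule F (Fin (d+1) → F) be an injective family with finrank (H i) = k + 1 for every i. Assume that for every finite set S of indices with S.card = A + 1 and every submodule Π with finrank Π = d + 1 − k one has ⨆_{i ∈ S} (H i ⊓ Π) = Π (i.e. every subfamily of A+1 members is a set of higgledy-piggledy k-subspaces). Then the family H is a (k+1)-uniform weak (d−k, A) subspace design: for every submodule W with finrank W = d − k, the number of indices i with H i ⊓ W ≠ ⊥ is at most A. -/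
open Module

/-- A vector space over `F` cannot be covered by `n` proper subspaces when `n ≤ |F|`. -/
lemma avoid_proper {F V ι : Type*} [Field F] [AddCommGroup V] [Module F V]
    (s : Finset ι) (f : ι → Submodule F V) (hf : ∀ i ∈ s, f i ≠ ⊤)
    (hcard : (s.card : Cardinal) ≤ Cardinal.mk F) :
    ∃ x : V, ∀ i ∈ s, x ∉ f i := by
  classical
  induction s using Finset.strongInduction with
  | _ s ih =>
    rcases s.eq_empty_or_nonempty with rfl | ⟨j, hj⟩
    · exact ⟨0, by simp⟩
    · set t := s.erase j with ht
      have htsub : t ⊂ s := Finset.erase_ssubset hj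
      have htcard : (t.card : Cardinal) < Cardinal.mk F :=
        lt_of_lt_of_le (by exact_mod_cast Finset.card_lt_card htsub) hcard
      by_cases hcase : ∃ u ∈ f j, ∀ i ∈ t, u ∉ f i
      · obtain ⟨u, huj, hut⟩ := hcase
        obtain ⟨v, -, hv⟩ := SetLike.exists_of_lt ((hf j hj).lt_top)
        -- bad set of scalars
        set B : Set F := {c : F | ∃ i ∈ t, v + c • u ∈ f i} with hB
        have hBlt : Cardinal.mk B < Cardinal.mk F := by
          have hinj : ∃ g : B → {i // i ∈ t}, Function.Injective g := by
            have hchoice : ∀ c : B, ∃ i : {i // i ∈ t}, v + (c : F) • u ∈ f i := by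
              rintro ⟨c, i, hi, hci⟩
              exact ⟨⟨i, hi⟩, hci⟩
            choose g hg using hchoice
            refine ⟨g, fun c c' hcc' => ?_⟩
            by_contra hne
            have h1 := hg c
            have h2 := hg c'
            rw [hcc'] at h1
            have hsub : ((c : F) - (c' : F)) • u ∈ f (g c') := by
              have := Submodule.sub_mem _ h1 h2
              simpa [sub_smul] using this
            have hc : (c : F) - (c' : F) ≠ 0 := fun h => hne (Subtype.ext (sub_eq_zero.mp h))
            have : u ∈ f (g c') := by
              have := Submodule.smul_mem _ ((c : F) - (c' : F))⁻¹ hsub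
              simpa [smul_smul, inv_mul_cancel₀ hc] using this
            exact hut _ (g c').2 this
          obtain ⟨g, hg⟩ := hinj
          have : Finite B := Finite.of_injective g hg
          haveI : Fintype B := Fintype.ofFinite B
          have hnat : Fintype.card B ≤ t.card := by
            have := Fintype.card_le_of_injective g hg
            simpa [Fintype.card_coe] using this
          calc Cardinal.mk B = (Fintype.card B : Cardinal) := Cardinal.mk_fintype B
            _ ≤ (t.card : Cardinal) := by exact_mod_cast hnat
            _ < Cardinal.mk F := htcard
        have : B ≠ Set.univ := by
          intro h
          rw [h, Cardinal.mk_univ] at hBlt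
          exact lt_irrefl _ hBlt
        obtain ⟨c, hc⟩ := (Set.ne_univ_iff_exists_notMem B).mp this
        refine ⟨v + c • u, fun i hi hmem => ?_⟩
        rcases eq_or_ne i j with rfl | hij
        · exact hv (by simpa using Submodule.sub_mem _ hmem (Submodule.smul_mem _ c huj))
        · exact hc ⟨i, Finset.mem_erase.mpr ⟨hij, hi⟩, hmem⟩
      · push_neg at hcase
        obtain ⟨x, hx⟩ := ih t htsub (fun i hi => hf i (Finset.mem_of_mem_erase hi))
          (le_trans (by exact_mod_cast le_of_lt (Finset.card_lt_card htsub)) hcard)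
        refine ⟨x, fun i hi hmem => ?_⟩
        rcases eq_or_ne i j with rfl | hij
        · obtain ⟨i', hi', hxi'⟩ := hcase x hmem
          exact hx i' hi' hxi'
        · exact hx i (Finset.mem_erase.mpr ⟨hij, hi⟩) hmem

theorem stmt_5 (F : Type*) [Field F] (d k N A : ℕ) (hk : 1 ≤ k) (hkd : k + 1 ≤ d)
    (hA : (A : Cardinal) < Cardinal.mk F)
    (H : Fin N → Submodule F (Fin (d + 1) → F))
    (hinj : Function.Injective H)
    (hrank : ∀ i, finrank F (H i) = k + 1)
    (hhig : ∀ S : Finset (Fin N), S.card = A + 1 →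
      ∀ P : Submodule F (Fin (d + 1) → F), finrank F P = d + 1 - k →
        (⨆ i ∈ S, H i ⊓ P) = P) :
    ∀ W : Submodule F (Fin (d + 1) → F), finrank F W = d - k →
      Set.ncard {i : Fin N | H i ⊓ W ≠ ⊥} ≤ A := by
  classical
  intro W hW
  by_contra hlt
  push_neg at hlt
  set T : Set (Fin N) := {i : Fin N | H i ⊓ W ≠ ⊥} with hT
  have hTcard : A + 1 ≤ T.toFinset.card := by
    rw [← Set.ncard_eq_toFinset_card']; omega
  obtain ⟨S, hSsub, hScard⟩ := Finset.exists_subset_card_eq hTcard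
  have hSmem : ∀ i ∈ S, H i ⊓ W ≠ ⊥ := by
    intro i hi
    have := hSsub hi
    rwa [Set.mem_toFinset] at this
  have htotal : finrank F (Fin (d + 1) → F) = d + 1 := Module.finrank_fin_fun F
  -- each H i ⊔ W is proper
  have hproper : ∀ i ∈ S, H i ⊔ W ≠ ⊤ := by
    intro i hi htop
    have h1 : 1 ≤ finrank F ↥(H i ⊓ W) := Submodule.one_le_finrank_iff.mpr (hSmem i hi)
    have h2 := Submodule.finrank_sup_add_finrank_inf_eq (H i) W
    rw [htop, finrank_top, htotal, hrank i, hW] at h2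
    omega
  have hcardF : ((S.card : ℕ) : Cardinal) ≤ Cardinal.mk F := by
    rw [hScard]
    calc ((A + 1 : ℕ) : Cardinal) = (A : Cardinal) + 1 := by push_cast; ring
      _ ≤ Order.succ (A : Cardinal) := Cardinal.add_one_le_succ _
      _ ≤ Cardinal.mk F := Order.succ_le_of_lt hA
  obtain ⟨x, hx⟩ := avoid_proper S (fun i => H i ⊔ W) hproper hcardF
  have hSne : S.Nonempty := Finset.card_pos.mp (by omega)
  obtain ⟨i₀, hi₀⟩ := hSne
  have hxW : x ∉ W := fun h => hx i₀ hi₀ (Submodule.mem_sup_right h)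
  have hxne : x ≠ 0 := fun h => hxW (h ▸ Submodule.zero_mem W)
  set P : Submodule F (Fin (d + 1) → F) := W ⊔ Submodule.span F {x} with hP
  have hdisj : W ⊓ Submodule.span F {x} = ⊥ := by
    rw [eq_bot_iff]
    rintro y ⟨hyW, hyx⟩
    obtain ⟨c, rfl⟩ := Submodule.mem_span_singleton.mp hyx
    rcases eq_or_ne c 0 with rfl | hc
    · simp
    · exfalso
      exact hxW (by simpa [smul_smul, inv_mul_cancel₀ hc] using Submodule.smul_mem W c⁻¹ hyW)
  have hPrank : finrank F P = d + 1 - k := by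
    have h2 := Submodule.finrank_sup_add_finrank_inf_eq W (Submodule.span F {x})
    rw [hdisj, finrank_bot, hW, finrank_span_singleton hxne] at h2
    rw [hP]
    omega
  have hsup := hhig S hScard P hPrank
  have hle : (⨆ i ∈ S, H i ⊓ P) ≤ W := by
    refine iSup_le fun i => iSup_le fun hi => ?_
    rintro y ⟨hyH, hyP⟩
    obtain ⟨w, hw, z, hz, rfl⟩ := Submodule.mem_sup.mp hyP
    obtain ⟨c, rfl⟩ := Submodule.mem_span_singleton.mp hz
    rcases eq_or_ne c 0 with rfl | hc
    · simpa using hw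
    · exfalso
      apply hx i hi
      have h1 : w + c • x - w ∈ H i ⊔ W :=
        Submodule.sub_mem _ (Submodule.mem_sup_left hyH) (Submodule.mem_sup_right hw)
      have h2 : c • x ∈ H i ⊔ W := by simpa using h1
      simpa [smul_smul, inv_mul_cancel₀ hc] using Submodule.smul_mem _ c⁻¹ h2
  rw [hsup] at hle
  exact hxW (hle (Submodule.mem_sup_right (Submodule.mem_span_singleton_self x)))
end

section
/- Let F be a field, m, s, A, N natural numbers with s ≤ m, and let H : Fin N → Submodule F (Fin m → F) be a family with finrank (H i) = m − s for every i. Assume that for every submodule W of Fin m → F with finrank W = s, the sum ∑_{i} finrank (H i ⊓ W) is at most A (i.e. the family is an (m−s)-uniform strong (s,A) subspace design). Then the family of dual annihilators i ↦ (H i).dualAnnihilator is an s-uniform strong (m−s,A) subspace design in the dual space: for every submodule V of Module.Dual F (Fin m → F) with finrank V = m − s, the sum ∑_{i} finrank ((H i).dualAnnihilator ⊓ V) is at most A. -/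
open Module

theorem stmt_6 (F : Type*) [Field F] (m s A N : ℕ) (hsm : s ≤ m)
    (H : Fin N → Submodule F (Fin m → F))
    (hrank : ∀ i, finrank F (H i) = m - s)
    (hstrong : ∀ W : Submodule F (Fin m → F), finrank F W = s →
      ∑ i, finrank F (H i ⊓ W : Submodule F (Fin m → F)) ≤ A) :
    ∀ V : Submodule F (Module.Dual F (Fin m → F)), finrank F V = m - s →
      ∑ i, finrank F
        ((H i).dualAnnihilator ⊓ V : Submodule F (Module.Dual F (Fin m → F))) ≤ A := by
  intro V hV
  set W := V.dualCoannihilator with hWdef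
  have hmF : finrank F (Fin m → F) = m := by simp
  have hDual : finrank F (Module.Dual F (Fin m → F)) = m := by
    rw [Subspace.dual_finrank_eq, hmF]
  have hWrank : finrank F W = s := by
    have h := Subspace.finrank_add_finrank_dualCoannihilator_eq V
    rw [← hWdef, hV, hmF] at h
    omega
  have hWann : W.dualAnnihilator = V :=
    Subspace.dualCoannihilator_dualAnnihilator_eq
  have key : ∀ i, finrank F ((H i).dualAnnihilator ⊓ V :
      Submodule F (Module.Dual F (Fin m → F))) = finrank F (H i ⊓ W : Submodule F (Fin m → F)) := by
    intro i
    have heq : ((H i).dualAnnihilator ⊓ V : Submodule F (Module.Dual F (Fin m → F)))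
        = (H i ⊔ W).dualAnnihilator := by
      rw [Submodule.dualAnnihilator_sup_eq, hWann]
    have hq : finrank F ((Fin m → F) ⧸ (H i ⊔ W)) = finrank F ((H i ⊔ W).dualAnnihilator) :=
      (Subspace.quotEquivAnnihilator (H i ⊔ W)).finrank_eq
    have hq2 : finrank F ((Fin m → F) ⧸ (H i ⊔ W)) + finrank F (H i ⊔ W : Submodule F (Fin m → F))
        = m := by rw [Submodule.finrank_quotient_add_finrank, hmF]
    have hsup : finrank F (H i ⊔ W : Submodule F (Fin m → F))
        + finrank F (H i ⊓ W : Submodule F (Fin m → F))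
        = finrank F (H i) + finrank F W := Submodule.finrank_sup_add_finrank_inf_eq _ _
    have hle := Submodule.finrank_le (H i ⊔ W)
    rw [heq, ← hq]
    rw [hrank i, hWrank] at hsup
    omega
  calc ∑ i, finrank F ((H i).dualAnnihilator ⊓ V : Submodule F (Module.Dual F (Fin m → F)))
      = ∑ i, finrank F (H i ⊓ W : Submodule F (Fin m → F)) := by simp [key]
    _ ≤ A := hstrong W hWrank
end

section
/- Let F be a field and d, k natural numbers with 1 ≤ k and k + 1 ≤ d. Let ℋ be a set of submodules of Fin (d+1) → F, each of finrank k+1, which is a generator set with respect to co-k-subspaces (for every submodule Π with finrank Π = d+1−k, ⨆_{H ∈ ℋ} (H ⊓ Π) = Π). Then min (Cardinal.mk F) ((∑_{i=0}^{k} ⌊(d−k+i)/(i+1)⌋ : ℕ) : Cardinal) < Cardinal.mk ℋ; equivalently, if ℋ is finite then either ∑_{i=0}^{k} ⌊(d−k+i)/(i+1)⌋ + 1 ≤ Set.ncard ℋ, or F is finite and Nat.card F + 1 ≤ Set.ncard ℋ. -/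
open Module

section Aux

universe u v w

variable {F : Type u} [Field F]

/-- Any subspace of finrank `≤ n` is contained in a subspace of finrank exactly `n`. -/
lemma aux_exists_superspace {V : Type v} [AddCommGroup V] [Module F V] [FiniteDimensional F V]
    (J : Submodule F V) (n : ℕ) (h1 : finrank F J ≤ n) :
    n ≤ finrank F V → ∃ W : Submodule F V, J ≤ W ∧ finrank F W = n := by
  induction n, h1 using Nat.le_induction with
  | base => exact fun _ => ⟨J, le_rfl, rfl⟩
  | succ n hn ih =>
    intro h2
    obtain ⟨W, hJW, hWr⟩ := ih (by omega)
    have hWne : W ≠ ⊤ := by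
      intro h
      rw [h, finrank_top] at hWr
      omega
    obtain ⟨v, hv⟩ : ∃ v, v ∉ W := by
      by_contra h
      push_neg at h
      exact hWne (Submodule.eq_top_iff'.mpr h)
    refine ⟨W ⊔ Submodule.span F {v}, le_trans hJW le_sup_left, ?_⟩
    have hv0 : v ≠ 0 := fun h => hv (h ▸ W.zero_mem)
    have hinf : W ⊓ Submodule.span F {v} = ⊥ := by
      rw [eq_bot_iff]
      intro y hy
      rw [Submodule.mem_inf] at hy
      obtain ⟨c, rfl⟩ := Submodule.mem_span_singleton.mp hy.2
      rcases eq_or_ne c 0 with hc | hc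
      · simp [hc]
      · exact absurd (by simpa [smul_smul, inv_mul_cancel₀ hc] using W.smul_mem c⁻¹ hy.1) hv
    have key := Submodule.finrank_sup_add_finrank_inf_eq W (Submodule.span F {v})
    rw [hinf, finrank_bot, finrank_span_singleton hv0, hWr] at key
    omega

lemma aux_finrank_finsetSup_le {V : Type v} [AddCommGroup V] [Module F V] [FiniteDimensional F V]
    {ι : Type w} (S : Finset ι) (A : ι → Submodule F V) :
    finrank F ↥(S.sup A) ≤ ∑ i ∈ S, finrank F (A i) := by
  classical
  induction S using Finset.induction with
  | empty => simp [finrank_bot]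
  | @insert j S hj ih =>
    rw [Finset.sup_insert, Finset.sum_insert hj]
    exact le_trans (Submodule.finrank_add_le_finrank_add_finrank _ _) (by omega)

/-- Transversal lemma: in a space of finrank `s + a`, any family of at most
`∑_{i<a} (s+i)/(i+1)` subspaces, each of finrank at least `a`, admits a common transversal
subspace of finrank `s`. -/
lemma aux_transversal (a : ℕ) :
    ∀ (s : ℕ) (V : Type v) [AddCommGroup V] [Module F V] [FiniteDimensional F V],
      finrank F V = s + a → ∀ {ι : Type w} (G : Finset ι) (A : ι → Submodule F V),
      (∀ i ∈ G, a ≤ finrank F (A i)) →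
      G.card ≤ ∑ i ∈ Finset.range a, (s + i) / (i + 1) →
      ∃ T : Submodule F V, finrank F T = s ∧ ∀ i ∈ G, A i ⊓ T ≠ ⊥ := by
  induction a with
  | zero =>
    intro s V _ _ _ hV ι G A _ hcard
    simp only [Finset.range_zero, Finset.sum_empty, Nat.le_zero, Finset.card_eq_zero] at hcard
    subst hcard
    refine ⟨⊤, ?_, by simp⟩
    rw [finrank_top, hV]
    omega
  | succ a ih =>
    intro s V _ _ _ hV ι G A hA hcard
    classical
    set g := (s + a) / (a + 1) with hg
    set C := G.filter (fun i => finrank F (A i) ≤ a + 1) with hC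
    obtain ⟨S, hSC, hScard⟩ := Finset.exists_subset_card_eq (min_le_left C.card g)
    set J := S.sup A with hJ
    have hSsubG : S ⊆ G := le_trans hSC (Finset.filter_subset _ _)
    have hJfin : finrank F J ≤ s + a := by
      have h1 : finrank F ↥J ≤ ∑ i ∈ S, finrank F ↥(A i) := aux_finrank_finsetSup_le S A
      have h2 : ∑ i ∈ S, finrank F (A i) ≤ S.card * (a + 1) := by
        have := Finset.sum_le_card_nsmul S (fun i => finrank F (A i)) (a + 1)
          (fun i hi => (Finset.mem_filter.mp (hSC hi)).2)
        simpa [smul_eq_mul] using this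
      have h3 : S.card ≤ g := hScard ▸ min_le_right _ _
      have h4 : g * (a + 1) ≤ s + a := Nat.div_mul_le_self _ _
      calc finrank F J ≤ S.card * (a + 1) := le_trans h1 h2
        _ ≤ g * (a + 1) := Nat.mul_le_mul_right _ h3
        _ ≤ s + a := h4
    obtain ⟨W, hJW, hWrank⟩ := aux_exists_superspace J (s + a) hJfin (by omega)
    set G' := C \ S with hG'
    set A' : ι → Submodule F ↥W := fun i => (A i).comap W.subtype with hA'def
    have hcomap : ∀ i, finrank F (A' i) = finrank F ↥(W ⊓ A i) := by
      intro i
      rw [hA'def]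
      rw [← Submodule.finrank_map_subtype_eq W ((A i).comap W.subtype),
        Submodule.map_comap_subtype]
    have hA'rank : ∀ i ∈ G', a ≤ finrank F (A' i) := by
      intro i hi
      have hiG : i ∈ G := Finset.filter_subset _ _ (Finset.mem_sdiff.mp hi).1
      have key := Submodule.finrank_sup_add_finrank_inf_eq W (A i)
      have h1 : finrank F ↥(W ⊔ A i) ≤ s + a + 1 := hV ▸ Submodule.finrank_le _
      have h2 : a + 1 ≤ finrank F (A i) := hA i hiG
      rw [hcomap]
      omega
    have hcard' : G'.card ≤ ∑ i ∈ Finset.range a, (s + i) / (i + 1) := by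
      rcases le_or_gt C.card g with h | h
      · have : S = C := Finset.eq_of_subset_of_card_le hSC (by omega)
        rw [hG', this, Finset.sdiff_self]
        simp
      · have hCG : C.card ≤ G.card := Finset.card_le_card (Finset.filter_subset _ _)
        have hsum : ∑ i ∈ Finset.range (a + 1), (s + i) / (i + 1)
            = (∑ i ∈ Finset.range a, (s + i) / (i + 1)) + g := Finset.sum_range_succ _ _
        have : G'.card = C.card - S.card := Finset.card_sdiff_of_subset hSC
        rw [hsum] at hcard
        omega
    obtain ⟨T', hT'rank, hT'meet⟩ := ih s ↥W hWrank G' A' hA'rank hcard'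
    refine ⟨T'.map W.subtype, ?_, ?_⟩
    · rw [Submodule.finrank_map_subtype_eq]
      exact hT'rank
    · intro i hiG
      have hTW : T'.map W.subtype ≤ W := Submodule.map_subtype_le _ _
      have hTrank : finrank F (T'.map W.subtype) = s := by
        rw [Submodule.finrank_map_subtype_eq]; exact hT'rank
      by_cases hiC : i ∈ C
      · by_cases hiS : i ∈ S
        · -- planted inside W: automatic intersection inside W
          have hAiW : A i ≤ W := le_trans (Finset.le_sup hiS) hJW
          have key := Submodule.finrank_sup_add_finrank_inf_eq (A i) (T'.map W.subtype)
          have hsup : finrank F ↥(A i ⊔ T'.map W.subtype) ≤ s + a := by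
            rw [← hWrank]
            exact Submodule.finrank_mono (sup_le hAiW hTW)
          have h2 : a + 1 ≤ finrank F (A i) := hA i hiG
          intro hbot
          rw [hbot, finrank_bot, hTrank] at key
          omega
        · -- passed to the recursion
          have hiG' : i ∈ G' := Finset.mem_sdiff.mpr ⟨hiC, hiS⟩
          have hne := hT'meet i hiG'
          obtain ⟨x, hx, hx0⟩ := (Submodule.ne_bot_iff _).mp hne
          rw [Submodule.mem_inf] at hx
          have h1 : (x : V) ∈ A i := hx.1
          have h2 : (x : V) ∈ T'.map W.subtype := ⟨x, hx.2, rfl⟩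
          refine (Submodule.ne_bot_iff _).mpr ⟨(x : V), Submodule.mem_inf.mpr ⟨h1, h2⟩, ?_⟩
          simpa using hx0
      · -- big subspace: automatic intersection
        have h2 : a + 2 ≤ finrank F (A i) := by
          have := Finset.mem_filter.not.mp hiC
          push_neg at this
          exact this hiG
        have key := Submodule.finrank_sup_add_finrank_inf_eq (A i) (T'.map W.subtype)
        have hsup : finrank F ↥(A i ⊔ T'.map W.subtype) ≤ s + a + 1 :=
          hV ▸ Submodule.finrank_le _
        intro hbot
        rw [hbot, finrank_bot, hTrank] at key
        omega

/-- A family of at most `|F|` proper subspaces cannot cover all nonzero vectors. -/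
lemma aux_avoid {W : Type v} [AddCommGroup W] [Module F W] [Nontrivial W] {ι : Type w}
    (G : Finset ι) (A : ι → Submodule F W) :
    (∀ i ∈ G, A i ≠ ⊤) → ((G.card : Cardinal) ≤ Cardinal.mk F) →
    ∃ x : W, x ≠ 0 ∧ ∀ i ∈ G, x ∉ A i := by
  classical
  induction G using Finset.induction with
  | empty =>
    intro _ _
    obtain ⟨x, hx⟩ := exists_ne (0 : W)
    exact ⟨x, hx, by simp⟩
  | @insert j G hjG ih =>
    intro hA hcard
    have hcardG : ((G.card : Cardinal) ≤ Cardinal.mk F) := by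
      refine le_trans ?_ hcard
      exact_mod_cast Nat.cast_le.mpr (Finset.card_le_card (Finset.subset_insert _ _))
    obtain ⟨v, hv0, hv⟩ := ih (fun i hi => hA i (Finset.mem_insert_of_mem hi)) hcardG
    by_cases hvj : v ∈ A j
    · -- need the line trick
      obtain ⟨w, hw⟩ : ∃ w, w ∉ A j := by
        by_contra h
        push_neg at h
        exact hA j (Finset.mem_insert_self _ _) (Submodule.eq_top_iff'.mpr h)
      set Bad : Set F := {c | ∃ i ∈ G, w + c • v ∈ A i} with hBad
      have hBadSmall : Cardinal.mk Bad < Cardinal.mk F := by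
        have hinj : ∃ f : Bad → {i // i ∈ G}, Function.Injective f := by
          have hw2 : ∀ c : Bad, ∃ i : {i // i ∈ G}, w + (c : F) • v ∈ A i := by
            rintro ⟨c, i, hi, hmem⟩
            exact ⟨⟨i, hi⟩, hmem⟩
          choose f hf using hw2
          refine ⟨f, ?_⟩
          intro c c' hcc
          by_contra hne
          have h1 := hf c
          have h2 := hf c'
          rw [hcc] at h1
          have hsub : ((c : F) - (c' : F)) • v ∈ A (f c') := by
            have := Submodule.sub_mem _ h1 h2
            simpa [sub_smul] using this
          have hcne : (c : F) - (c' : F) ≠ 0 := by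
            intro h
            exact hne (Subtype.ext (by linear_combination (norm := ring_nf) h))
          have : v ∈ A (f c') := by
            have := Submodule.smul_mem _ ((c : F) - (c' : F))⁻¹ hsub
            simpa [smul_smul, inv_mul_cancel₀ hcne] using this
          exact hv (f c') (f c').2 this
        obtain ⟨f, hf⟩ := hinj
        have h1 : Cardinal.mk Bad ≤ (G.card : Cardinal) := by
          have hinj2 : Function.Injective
              (fun c : Bad => (ULift.up.{u} (G.equivFin (f c)) : ULift (Fin G.card))) := by
            intro c c' h
            apply hf
            apply G.equivFin.injective
            exact congrArg ULift.down h
          have := Cardinal.mk_le_of_injective hinj2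
          simpa using this
        have h2 : ((G.card : Cardinal) + 1) ≤ Cardinal.mk F := by
          rw [Finset.card_insert_of_notMem hjG] at hcard
          push_cast at hcard
          exact hcard
        calc Cardinal.mk Bad ≤ (G.card : Cardinal) := h1
          _ < (G.card : Cardinal) + 1 := by
              exact_mod_cast Nat.lt_succ_self G.card
          _ ≤ Cardinal.mk F := h2
      obtain ⟨c, hc⟩ : ∃ c : F, c ∉ Bad := by
        by_contra h
        push_neg at h
        have : Bad = Set.univ := Set.eq_univ_of_forall h
        rw [this, Cardinal.mk_univ] at hBadSmall
        exact lt_irrefl _ hBadSmall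
      have hxj : w + c • v ∉ A j := by
        intro hmem
        have hcv : c • v ∈ A j := Submodule.smul_mem _ _ hvj
        have : w ∈ A j := by
          have := Submodule.sub_mem _ hmem hcv
          simpa using this
        exact hw this
      refine ⟨w + c • v, ?_, ?_⟩
      · intro h
        exact hxj (h ▸ (A j).zero_mem)
      · intro i hi
        rcases Finset.mem_insert.mp hi with rfl | hiG
        · exact hxj
        · exact fun hmem => hc ⟨i, hiG, hmem⟩
    · exact ⟨v, hv0, fun i hi => by
        rcases Finset.mem_insert.mp hi with rfl | hiG
        · exact hvj
        · exact hv i hiG⟩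

end Aux

theorem stmt_9 (F : Type*) [Field F] (d k : ℕ) (hk : 1 ≤ k) (hkd : k + 1 ≤ d)
    (ℋ : Set (Submodule F (Fin (d + 1) → F)))
    (hrank : ∀ H ∈ ℋ, finrank F H = k + 1)
    (hgen : ∀ P : Submodule F (Fin (d + 1) → F), finrank F P = d + 1 - k →
      (⨆ H ∈ ℋ, H ⊓ P) = P) :
    min (Cardinal.mk F)
        ((∑ i ∈ Finset.range (k + 1), (d - k + i) / (i + 1) : ℕ) : Cardinal) <
      Cardinal.mk ℋ := by
  classical
  by_contra hcon
  push_neg at hcon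
  have hVfin : finrank F (Fin (d + 1) → F) = d + 1 := by
    simp [Module.finrank_fin_fun]
  have h1 : Cardinal.mk ℋ ≤ ((∑ i ∈ Finset.range (k + 1), (d - k + i) / (i + 1) : ℕ) : Cardinal) :=
    le_trans hcon (min_le_right _ _)
  have h2 : Cardinal.mk ℋ ≤ Cardinal.mk F := le_trans hcon (min_le_left _ _)
  have hfin : ℋ.Finite := by
    rw [← Cardinal.lt_aleph0_iff_set_finite]
    exact lt_of_le_of_lt h1 (Cardinal.nat_lt_aleph0 _)
  set G := hfin.toFinset with hG
  have hmkG : Cardinal.mk ℋ = (G.card : Cardinal) := by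
    rw [hG]
    exact (Cardinal.mk_congr (Equiv.subtypeEquivRight fun x =>
      (hfin.mem_toFinset (a := x)).symm)).trans Cardinal.mk_coe_finset
  have hGcard : G.card ≤ ∑ i ∈ Finset.range (k + 1), (d - k + i) / (i + 1) := by
    rw [hmkG] at h1
    exact_mod_cast h1
  -- Step A: find a transversal subspace of finrank d - k
  obtain ⟨S0, hS0rank, hS0meet⟩ := aux_transversal (F := F) (k + 1) (d - k) (Fin (d + 1) → F)
    (by omega) G id
    (fun H hH => by
      have := hrank H (hfin.mem_toFinset.mp hH)
      simp only [id_eq]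
      omega)
    hGcard
  -- Step B: pass to the quotient
  have hQrank : finrank F ((Fin (d + 1) → F) ⧸ S0) = k + 1 := by
    have := Submodule.finrank_quotient_add_finrank S0
    rw [hVfin, hS0rank] at this
    omega
  haveI : Nontrivial ((Fin (d + 1) → F) ⧸ S0) :=
    Module.nontrivial_of_finrank_pos (R := F) (by omega)
  have hBne : ∀ H ∈ G, H.map S0.mkQ ≠ ⊤ := by
    intro H hH htop
    have hHrank : finrank F ↥H = k + 1 := hrank H (hfin.mem_toFinset.mp hH)
    set φ : ↥H →ₗ[F] ((Fin (d + 1) → F) ⧸ S0) := S0.mkQ.comp H.subtype with hφ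
    have hrange : LinearMap.range φ = H.map S0.mkQ := by
      rw [hφ, LinearMap.range_comp, Submodule.range_subtype]
    have hker : LinearMap.ker φ = S0.comap H.subtype := by
      rw [hφ, LinearMap.ker_comp, Submodule.ker_mkQ]
    have hkerpos : 0 < finrank F (LinearMap.ker φ) := by
      rw [hker]
      have heq : finrank F (S0.comap H.subtype) = finrank F ↥(H ⊓ S0) := by
        rw [← Submodule.finrank_map_subtype_eq H (S0.comap H.subtype),
          Submodule.map_comap_subtype]
      rw [heq]
      have hne : H ⊓ S0 ≠ ⊥ := by simpa using hS0meet H hH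
      exact Nat.pos_of_ne_zero (fun h0 => hne (Submodule.finrank_eq_zero.mp h0))
    have hrn := LinearMap.finrank_range_add_finrank_ker φ
    rw [hrange, htop, finrank_top, hQrank, hHrank] at hrn
    omega
  obtain ⟨x, hx0, hx⟩ := aux_avoid G (fun H => H.map S0.mkQ) hBne (by rw [← hmkG]; exact h2)
  obtain ⟨v0, hv0⟩ := Submodule.mkQ_surjective S0 x
  have hv0S : v0 ∉ S0 := by
    intro h
    apply hx0
    rw [← hv0]
    exact (Submodule.Quotient.mk_eq_zero S0).mpr h
  have hv0ne : v0 ≠ 0 := fun h => hv0S (h ▸ S0.zero_mem)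
  set P := S0 ⊔ Submodule.span F {v0} with hP
  have hdisj : S0 ⊓ Submodule.span F {v0} = ⊥ := by
    rw [eq_bot_iff]
    intro y hy
    rw [Submodule.mem_inf] at hy
    obtain ⟨c, rfl⟩ := Submodule.mem_span_singleton.mp hy.2
    rcases eq_or_ne c 0 with hc | hc
    · simp [hc]
    · exact absurd (by simpa [smul_smul, inv_mul_cancel₀ hc] using S0.smul_mem c⁻¹ hy.1) hv0S
  have hPrank : finrank F P = d + 1 - k := by
    rw [hP]
    have key := Submodule.finrank_sup_add_finrank_inf_eq S0 (Submodule.span F {v0})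
    rw [hdisj, finrank_bot, finrank_span_singleton hv0ne, hS0rank] at key
    omega
  have hsup := hgen P hPrank
  have hle : (⨆ H ∈ ℋ, H ⊓ P) ≤ S0 := by
    apply iSup₂_le
    intro H hH y hy
    rw [Submodule.mem_inf] at hy
    obtain ⟨hyH, hyP⟩ := hy
    rw [hP, Submodule.mem_sup] at hyP
    obtain ⟨σ, hσ, z, hz, rfl⟩ := hyP
    obtain ⟨c, rfl⟩ := Submodule.mem_span_singleton.mp hz
    rcases eq_or_ne c 0 with hc | hc
    · simpa [hc] using hσ
    · exfalso
      apply hx H (hfin.mem_toFinset.mpr hH)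
      have hmem : S0.mkQ (σ + c • v0) ∈ H.map S0.mkQ := Submodule.mem_map_of_mem hyH
      have hmk : S0.mkQ (σ + c • v0) = c • x := by
        rw [map_add, map_smul, hv0]
        have : S0.mkQ σ = 0 := (Submodule.Quotient.mk_eq_zero S0).mpr hσ
        rw [this, zero_add]
      rw [hmk] at hmem
      have := Submodule.smul_mem _ c⁻¹ hmem
      simpa [smul_smul, inv_mul_cancel₀ hc] using this
  have hv0P : v0 ∈ P := by
    rw [hP]
    exact Submodule.mem_sup_right (Submodule.mem_span_singleton_self v0)
  rw [hsup] at hle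
  exact hv0S (hle hv0P)
end

section
/- Let F be a field, m, r, A, N natural numbers with 2 ≤ r, r + 1 ≤ m and N ≥ A + 1, and set T := ∑_{i=0}^{r−1} ⌊(m−r+i)/(i+1)⌋. Assume F has at least T + 1 elements ((T : Cardinal) < Cardinal.mk F). If H : Fin N → Submodule F (Fin m → F) is an injective family with finrank (H i) = r for every i, and for every submodule W of Fin m → F with finrank W = m − r the number of indices i with H i ⊓ W ≠ ⊥ is at most A (i.e. the family is an r-uniform weak (m−r, A) subspace design), then A ≥ T. -/
open Module

/-!
Dualize: a subspace `W` of dimension `m - r` meets `H` nontrivially exactly when the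
`r`-dimensional subspace `W^0` of the dual space meets the `(m - r)`-dimensional annihilator
`H^0` nontrivially. Such an `r`-dimensional subspace can be built greedily, one dimension at a
time: when `c + 1` dimensions are still missing from the current subspace `U`, every `H^0` not
yet hit spans with `U` a subspace of codimension at most `c + 1`, so any
`⌈(m - r) / (c + 1)⌉ = ⌊(m - r + c) / (c + 1)⌋` of these spans still meet outside `U`, and
adjoining a common vector outside `U` hits all of them at once. Summing over `c < r`, any
`∑_{i<r} ⌈(m - r) / (i + 1)⌉` of the `H` are met by a single `W`, so a weak `(m - r, A)`
subspace design needs `A` to be at least that sum.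
-/

namespace Submodule

variable {K V : Type*} [Field K] [AddCommGroup V] [Module K V]

theorem inf_ne_bot_of_mem_sup_of_notMem {U G : Submodule K V} {u : V} (hu : u ∈ G ⊔ U)
    (huU : u ∉ U) : (U ⊔ span K {u}) ⊓ G ≠ ⊥ := by
  obtain ⟨g, hg, w, hw, rfl⟩ := mem_sup.mp hu
  have hg0 : g ≠ 0 := by
    rintro rfl
    exact huU (by simpa using hw)
  have hgU : g ∈ U ⊔ span K {g + w} := by
    simpa using sub_mem (mem_sup_right (mem_span_singleton_self (g + w))) (mem_sup_left hw)
  exact (Submodule.ne_bot_iff _).mpr ⟨g, mem_inf.mpr ⟨hgU, hg⟩, hg0⟩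

variable [FiniteDimensional K V]

theorem finrank_le_finrank_finset_inf_add_card_mul {ι : Type*} (P : ι → Submodule K V) (k : ℕ)
    (B : Finset ι) (hP : ∀ j ∈ B, finrank K V ≤ finrank K (P j) + k) :
    finrank K V ≤ finrank K (B.inf P : Submodule K V) + B.card * k := by
  classical
  induction B using Finset.induction_on with
  | empty => rw [Finset.inf_empty, finrank_top]; simp
  | @insert a B ha ih =>
    have hsup := finrank_sup_add_finrank_inf_eq (P a) (B.inf P)
    have hsup_le := finrank_le (P a ⊔ B.inf P)
    have hB := ih fun j hj ↦ hP j (Finset.mem_insert_of_mem hj)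
    have ha' := hP a (Finset.mem_insert_self a B)
    rw [Finset.inf_insert, Finset.card_insert_of_notMem ha]
    nlinarith

theorem exists_finrank_eq_succ_inf_ne_bot {ι : Type*} (U : Submodule K V)
    (G : ι → Submodule K V) (k : ℕ) (B : Finset ι)
    (hcodim : ∀ j ∈ B, finrank K V ≤ finrank K (G j ⊔ U : Submodule K V) + k)
    (hB : finrank K U + B.card * k < finrank K V) :
    ∃ U₁ : Submodule K V, U ≤ U₁ ∧ finrank K U₁ = finrank K U + 1 ∧
      ∀ j ∈ B, U₁ ⊓ G j ≠ ⊥ := by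
  have hI := finrank_le_finrank_finset_inf_add_card_mul _ k B hcodim
  have hIU : ¬ (B.inf fun j ↦ G j ⊔ U) ≤ U := fun h ↦ by have := finrank_mono h; omega
  obtain ⟨u, huI, huU⟩ := SetLike.not_le_iff_exists.mp hIU
  refine ⟨U ⊔ span K {u}, le_sup_left, finrank_sup_span_singleton huU, fun j hj ↦ ?_⟩
  exact inf_ne_bot_of_mem_sup_of_notMem (Finset.inf_le (f := fun j ↦ G j ⊔ U) hj huI) huU

theorem exists_le_finrank_eq_inf_ne_bot {ι : Type*} {r s : ℕ} (hV : finrank K V = r + s)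
    (G : ι → Submodule K V) (hG : ∀ j, s ≤ finrank K (G j)) (c : ℕ) (U : Submodule K V)
    (hU : finrank K U + c = r) (S : Finset ι)
    (hS : S.card ≤ ∑ i ∈ Finset.range c, (s + i) / (i + 1)) :
    ∃ U' : Submodule K V, U ≤ U' ∧ finrank K U' = r ∧ ∀ j ∈ S, U' ⊓ G j ≠ ⊥ := by
  classical
  induction c generalizing U S with
  | zero => exact ⟨U, le_rfl, hU, by simp_all⟩
  | succ c ih =>
    rw [Finset.sum_range_succ] at hS
    set t := (s + c) / (c + 1)
    set missed := S.filter fun j ↦ U ⊓ G j = ⊥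
    obtain ⟨B, hBm, hBcard⟩ := Finset.exists_subset_card_eq (min_le_left missed.card t)
    have hcodim :
        ∀ j ∈ B, finrank K V ≤ finrank K (G j ⊔ U : Submodule K V) + (c + 1) := fun j hj ↦ by
      have hdisj : U ⊓ G j = ⊥ := (Finset.mem_filter.mp (hBm hj)).2
      have := finrank_sup_add_finrank_inf_eq (G j) U
      rw [inf_comm, hdisj, finrank_bot] at this
      have := hG j
      omega
    have hBt : B.card * (c + 1) ≤ s + c :=
      (Nat.mul_le_mul_right _ (by omega)).trans (Nat.div_mul_le_self _ _)
    obtain ⟨U₁, hUU₁, hU₁, hB⟩ :=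
      exists_finrank_eq_succ_inf_ne_bot U G (c + 1) B hcodim (by omega)
    have hrest : (missed \ B).card ≤ ∑ i ∈ Finset.range c, (s + i) / (i + 1) := by
      have : missed.card ≤ S.card := Finset.card_filter_le _ _
      rw [Finset.card_sdiff_of_subset hBm]
      omega
    obtain ⟨U', hU₁U', hU', hmeet⟩ := ih U₁ (by omega) (missed \ B) hrest
    refine ⟨U', hUU₁.trans hU₁U', hU', fun j hj ↦ ?_⟩
    by_cases hjB : j ∈ B
    · exact ne_bot_of_le_ne_bot (hB j hjB) (inf_le_inf_right _ hU₁U')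
    by_cases hjm : j ∈ missed
    · exact hmeet j (Finset.mem_sdiff.mpr ⟨hjm, hjB⟩)
    · have hUj : U ⊓ G j ≠ ⊥ := by simpa [missed, hj] using hjm
      exact ne_bot_of_le_ne_bot hUj (inf_le_inf_right _ (hUU₁.trans hU₁U'))

theorem exists_finrank_eq_inf_ne_bot {ι : Type*} {r s : ℕ} (hV : finrank K V = r + s)
    (G : ι → Submodule K V) (hG : ∀ j, s ≤ finrank K (G j)) (S : Finset ι)
    (hS : S.card ≤ ∑ i ∈ Finset.range r, (s + i) / (i + 1)) :
    ∃ U : Submodule K V, finrank K U = r ∧ ∀ j ∈ S, U ⊓ G j ≠ ⊥ := by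
  obtain ⟨U, -, hU, hmeet⟩ := exists_le_finrank_eq_inf_ne_bot hV G hG r ⊥ (by simp) S hS
  exact ⟨U, hU, hmeet⟩

theorem exists_finrank_eq_sub_inf_ne_bot {ι : Type*} {r : ℕ} (hr : r ≤ finrank K V)
    (H : ι → Submodule K V) (hH : ∀ j, finrank K (H j) = r) (S : Finset ι)
    (hS : S.card ≤ ∑ i ∈ Finset.range r, (finrank K V - r + i) / (i + 1)) :
    ∃ W : Submodule K V, finrank K W = finrank K V - r ∧ ∀ j ∈ S, H j ⊓ W ≠ ⊥ := by
  have hdual : finrank K (Dual K V) = r + (finrank K V - r) := by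
    rw [Subspace.dual_finrank_eq]; omega
  have hann (j) : finrank K V - r ≤ finrank K (H j).dualAnnihilator := by
    have := Subspace.finrank_add_finrank_dualAnnihilator_eq (H j)
    rw [hH j] at this
    omega
  obtain ⟨U, hU, hmeet⟩ :=
    exists_finrank_eq_inf_ne_bot hdual (fun j ↦ (H j).dualAnnihilator) hann S hS
  have hW := Subspace.finrank_add_finrank_dualCoannihilator_eq U
  refine ⟨U.dualCoannihilator, by omega, fun j hj hbot ↦ ?_⟩
  -- A nonzero functional in `U ⊓ (H j)^0` vanishes on `H j ⊔ U^0`, so these cannot span.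
  have hspan : H j ⊔ U.dualCoannihilator = ⊤ :=
    eq_top_of_disjoint _ _ (by rw [hH j]; omega) (disjoint_iff.mpr hbot)
  apply hmeet j hj
  rw [inf_comm, ← Subspace.dualCoannihilator_dualAnnihilator_eq (W := U),
    ← dualAnnihilator_sup_eq, hspan, dualAnnihilator_top]

end Submodule

theorem stmt_10_general (F : Type*) [Field F] (m r A N : ℕ) (hrm : r + 1 ≤ m)
    (hN : A + 1 ≤ N)
    (H : Fin N → Submodule F (Fin m → F))
    (hrank : ∀ i, finrank F (H i) = r)
    (hweak : ∀ W : Submodule F (Fin m → F), finrank F W = m - r →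
      Set.ncard {i : Fin N | H i ⊓ W ≠ ⊥} ≤ A) :
    ∑ i ∈ Finset.range r, (m - r + i) / (i + 1) ≤ A := by
  by_contra! hlt
  obtain ⟨S, -, hS⟩ :=
    Finset.exists_subset_card_eq (show A + 1 ≤ (Finset.univ : Finset (Fin N)).card by simpa)
  obtain ⟨W, hW, hmeet⟩ := Submodule.exists_finrank_eq_sub_inf_ne_bot
    (by rw [finrank_fin_fun]; omega) H hrank S (by rw [finrank_fin_fun]; omega)
  rw [finrank_fin_fun] at hW
  have hle := Set.ncard_le_ncard (t := {i | H i ⊓ W ≠ ⊥}) (fun j hj ↦ hmeet j hj)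
  rw [Set.ncard_coe_finset, hS] at hle
  have := hweak W hW
  omega

theorem stmt_10 (F : Type*) [Field F] (m r A N : ℕ) (hr : 2 ≤ r) (hrm : r + 1 ≤ m)
    (hN : A + 1 ≤ N)
    (hF : ((∑ i ∈ Finset.range r, (m - r + i) / (i + 1) : ℕ) : Cardinal) < Cardinal.mk F)
    (H : Fin N → Submodule F (Fin m → F))
    (hinj : Function.Injective H)
    (hrank : ∀ i, finrank F (H i) = r)
    (hweak : ∀ W : Submodule F (Fin m → F), finrank F W = m - r →
      Set.ncard {i : Fin N | H i ⊓ W ≠ ⊥} ≤ A) :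
    ∑ i ∈ Finset.range r, (m - r + i) / (i + 1) ≤ A :=
  stmt_10_general F m r A N hrm hN H hrank hweak
end

section
/- Let F be a field, m a natural number, M : Matrix (Fin m) (Fin m) (Polynomial F) a square matrix of univariate polynomials, and t ∈ F. Let R := finrank F (LinearMap.ker ((M.map (Polynomial.eval t)).mulVecLin)), the rank of the kernel of the F-matrix obtained by evaluating every entry of M at t. Then (Polynomial.X − Polynomial.C t) ^ R divides the determinant M.det in Polynomial F. In particular, if det(M(t)) = 0 and M.det ≠ 0, then t is a root of the polynomial M.det of multiplicity at least R. -/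
/-!
Extend a basis of `ker M(t)` to a basis of `Fⁿ` and let `P` be the (invertible, scalar) matrix
of this basis. The first `R` columns of `M * P` vanish at `t`, hence are divisible by `X - C t`,
so `(X - C t) ^ R` divides `det (M * P) = det M * det P`, and `det P` is a unit.
-/

open Module Polynomial

theorem Module.Basis.sumExtend_apply_inl {ι K V : Type*} [DivisionRing K] [AddCommGroup V]
    [Module K V] {v : ι → V} (hv : LinearIndependent K v) (i : ι) :
    Basis.sumExtend hv (Sum.inl i) = v i := by
  simp only [Basis.sumExtend, Basis.coe_reindex, Basis.coe_extend, Function.comp_apply]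
  rfl

namespace Matrix

variable {n R : Type*} [Fintype n] [DecidableEq n]

theorem pow_card_dvd_det_of_dvd_col [CommRing R] (A : Matrix n n R) (a : R) (s : Finset n)
    (h : ∀ j ∈ s, ∀ i, a ∣ A i j) : a ^ s.card ∣ A.det := by
  choose! q hq using h
  set v : n → R := fun j => if j ∈ s then a else 1
  set Q : Matrix n n R := of fun i j => if j ∈ s then q j i else A i j
  have hA : A = of fun i j => v j * Q i j := by
    ext i j
    by_cases hj : j ∈ s <;> simp [v, Q, hj, ← hq]
  rw [hA, det_mul_row, Fintype.prod_ite_mem, Finset.prod_const]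
  exact dvd_mul_right _ _

omit [DecidableEq n] in
theorem eval_mul_map_C_apply [CommRing R] (M : Matrix n n R[X]) (N : Matrix n n R) (t : R)
    (i j : n) : eval t ((M * N.map C) i j) = (M.map (eval t) *ᵥ fun k => N k j) i := by
  simp [mul_apply, mulVec, dotProduct, eval_finsetSum]

variable {F ι : Type*} [Field F] [Fintype ι]

theorem pow_card_dvd_det_of_linearIndependent (M : Matrix n n F[X]) (t : F) (v : ι → n → F)
    (hv : LinearIndependent F v) (hker : ∀ k, M.map (eval t) *ᵥ v k = 0) :
    (X - C t) ^ Fintype.card ι ∣ M.det := by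
  let b₀ := Basis.sumExtend hv
  let e := b₀.indexEquiv (Pi.basisFun F n)
  let b := b₀.reindex e
  let P := (Pi.basisFun F n).toMatrix b
  have hP : IsUnit P.det := by
    rw [← Basis.det_apply]
    exact (Pi.basisFun F n).isUnit_det b
  let s : Finset n := Finset.univ.map (Function.Embedding.inl.trans e.toEmbedding)
  have hcol : ∀ j ∈ s, ∀ i, X - C t ∣ (M * P.map C) i j := by
    intro j hj i
    obtain ⟨k, -, rfl⟩ := Finset.mem_map.mp hj
    have hbk : (fun l => P l (e (Sum.inl k))) = v k := by
      ext l
      simp [P, b, b₀, Basis.toMatrix_apply, Basis.sumExtend_apply_inl]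
    rw [dvd_iff_isRoot, IsRoot, eval_mul_map_C_apply]
    simp [hbk, hker]
  have := pow_card_dvd_det_of_dvd_col _ _ s hcol
  rw [det_mul, ← RingHom.mapMatrix_apply, ← RingHom.map_det, Finset.card_map,
    Finset.card_univ] at this
  exact ((hP.map C).dvd_mul_right).mp this

theorem pow_finrank_ker_dvd_det (M : Matrix n n F[X]) (t : F) :
    (X - C t) ^ finrank F (LinearMap.ker (M.map (eval t)).mulVecLin) ∣ M.det := by
  set K := LinearMap.ker (M.map (eval t)).mulVecLin
  have hv : LinearIndependent F fun k => (finBasis F K k : n → F) :=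
    (finBasis F K).linearIndependent.map' K.subtype K.ker_subtype
  simpa using pow_card_dvd_det_of_linearIndependent M t _ hv fun k => (finBasis F K k).2

end Matrix

theorem stmt_13 (F : Type*) [Field F] (m : ℕ)
    (M : Matrix (Fin m) (Fin m) (Polynomial F)) (t : F)
    (R : ℕ)
    (hR : R = finrank F (LinearMap.ker (Matrix.mulVecLin (M.map (Polynomial.eval t))))) :
    (Polynomial.X - Polynomial.C t) ^ R ∣ M.det ∧
      ((M.map (Polynomial.eval t)).det = 0 → M.det ≠ 0 →
        R ≤ Polynomial.rootMultiplicity t M.det) := by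
  subst hR
  have hdvd := M.pow_finrank_ker_dvd_det t
  exact ⟨hdvd, fun _ hdet => (le_rootMultiplicity_iff hdet).mpr hdvd⟩
end

section
/- Let N, r, d be natural numbers with 1 ≤ r and r ≤ d, and let j, b : Fin N → ℕ be strictly monotone functions with j k ≤ r − 1 and b k ≤ d − r for all k. For a permutation σ of Fin N define S(σ) := ∑_{k} b k · j (σ k). Then: (i) for every permutation σ with σ ≠ 1 (the identity), S(σ) < S(1); (ii) if N + 1 ≤ d then 3·S(1) + Nat.choose N 2 · d ≤ 3·N·(d−r)·(r−1); (iii) for every permutation σ, 2·S(1) ≤ 2·S(σ) + N·(d−r)·(r−1). -/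
private lemma step_lemma {N : ℕ} {f : Fin N → ℕ} (hf : StrictMono f) :
    ∀ (m : ℕ) (a c : Fin N), a.val + m ≤ c.val → f a + m ≤ f c := by
  intro m
  induction m with
  | zero =>
    intro a c h
    simpa using hf.monotone (Fin.le_def.mpr (by omega))
  | succ m ih =>
    intro a c h
    have hc : c.val - 1 < N := by omega
    have h1 : f a + m ≤ f ⟨c.val - 1, hc⟩ := ih a _ (by simp; omega)
    have h2 : f ⟨c.val - 1, hc⟩ < f c := hf (by simp [Fin.lt_def]; omega)
    omega

private lemma sum_id_int (n : ℕ) :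
    2 * ∑ i ∈ Finset.range n, (i : ℤ) = n * (n - 1) := by
  induction n with
  | zero => simp
  | succ n ih =>
    rw [Finset.sum_range_succ]
    push_cast
    push_cast at ih
    ring_nf
    ring_nf at ih
    linarith

private lemma sum_sq_int (n : ℕ) :
    6 * ∑ i ∈ Finset.range n, (i : ℤ) ^ 2 = n * (n - 1) * (2 * n - 1) := by
  induction n with
  | zero => simp
  | succ n ih =>
    rw [Finset.sum_range_succ]
    push_cast
    push_cast at ih
    ring_nf
    ring_nf at ih
    linarith

private lemma agg_lemma (N d : ℕ) (hd : N + 1 ≤ d) :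
    ∑ i ∈ Finset.range N, i * d ≤ ∑ i ∈ Finset.range N, 3 * (i * (d - 1 - i)) := by
  rw [← Nat.cast_le (α := ℤ), Nat.cast_sum, Nat.cast_sum]
  have e1 : ∀ i ∈ Finset.range N, ((i * d : ℕ) : ℤ) = (i : ℤ) * d := by
    intro i _; push_cast; ring
  have e2 : ∀ i ∈ Finset.range N,
      ((3 * (i * (d - 1 - i)) : ℕ) : ℤ) = 3 * ((d : ℤ) - 1) * i - 3 * (i : ℤ) ^ 2 := by
    intro i hi
    have hi' : i < N := Finset.mem_range.mp hi
    have hc : ((d - 1 - i : ℕ) : ℤ) = (d : ℤ) - 1 - i := by omega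
    rw [Nat.cast_mul, Nat.cast_mul, hc]
    push_cast; ring
  rw [Finset.sum_congr rfl e1, Finset.sum_congr rfl e2, ← Finset.sum_mul,
    Finset.sum_sub_distrib, ← Finset.mul_sum, ← Finset.mul_sum]
  have h1 := sum_id_int N
  have h2 := sum_sq_int N
  have key : 0 ≤ (N : ℤ) * ((N : ℤ) - 1) * ((d : ℤ) - N - 1) := by
    have hnn : 0 ≤ (N : ℤ) * ((N : ℤ) - 1) := by
      rcases Nat.eq_zero_or_pos N with h | h
      · simp [h]
      · have : (1 : ℤ) ≤ N := by exact_mod_cast h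
        nlinarith
    have hdN : 0 ≤ (d : ℤ) - N - 1 := by omega
    exact mul_nonneg hnn hdN
  nlinarith [h1, h2, key]

theorem stmt_14 (N r d : ℕ) (hr : 1 ≤ r) (hrd : r ≤ d)
    (j b : Fin N → ℕ) (hj : StrictMono j) (hb : StrictMono b)
    (hjr : ∀ k, j k ≤ r - 1) (hbd : ∀ k, b k ≤ d - r) :
    (∀ σ : Equiv.Perm (Fin N), σ ≠ 1 →
      ∑ k, b k * j (σ k) < ∑ k, b k * j k) ∧
    (N + 1 ≤ d →
      3 * (∑ k, b k * j k) + Nat.choose N 2 * d ≤ 3 * N * (d - r) * (r - 1)) ∧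
    (∀ σ : Equiv.Perm (Fin N),
      2 * (∑ k, b k * j k) ≤ 2 * (∑ k, b k * j (σ k)) + N * (d - r) * (r - 1)) := by
  have hmono : Monovary b j := fun i k h => (hb (hj.lt_iff_lt.mp h)).le
  -- Pointwise refined bounds from strict monotonicity
  have key_j : ∀ k : Fin N, j k + (N - 1 - k.val) ≤ r - 1 := by
    intro k
    have hk : (N - 1 : ℕ) < N := by have := k.pos; omega
    have := step_lemma hj (N - 1 - k.val) k ⟨N - 1, hk⟩ (by simp; omega)
    exact this.trans (hjr _)
  have key_b : ∀ k : Fin N, b k + (N - 1 - k.val) ≤ d - r := by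
    intro k
    have hk : (N - 1 : ℕ) < N := by have := k.pos; omega
    have := step_lemma hb (N - 1 - k.val) k ⟨N - 1, hk⟩ (by simp; omega)
    exact this.trans (hbd _)
  -- Part 1
  have part1 : ∀ σ : Equiv.Perm (Fin N), σ ≠ 1 →
      ∑ k, b k * j (σ k) < ∑ k, b k * j k := by
    intro σ hσ
    rw [Monovary.sum_mul_comp_perm_lt_sum_mul_iff hmono]
    intro hmv
    apply hσ
    have hsm : StrictMono ⇑σ := by
      intro i k hik
      rcases lt_trichotomy (σ i) (σ k) with h | h | h
      · exact h
      · exact absurd (σ.injective h) (ne_of_lt hik)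
      · exact absurd (hmv (show (j ∘ ⇑σ) k < (j ∘ ⇑σ) i from hj h))
          (not_le.mpr (hb hik))
    have he : StrictMono.orderIsoOfSurjective ⇑σ hsm σ.surjective = OrderIso.refl (Fin N) :=
      Subsingleton.elim _ _
    apply Equiv.ext
    intro k
    have := DFunLike.congr_fun he k
    rw [StrictMono.coe_orderIsoOfSurjective] at this
    simpa using this
  -- Part 2
  have part2 : N + 1 ≤ d →
      3 * (∑ k, b k * j k) + Nat.choose N 2 * d ≤ 3 * N * (d - r) * (r - 1) := by
    intro hd
    have hchoose : Nat.choose N 2 = ∑ i ∈ Finset.range N, i := by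
      have := Finset.sum_range_id_mul_two N
      rw [Nat.choose_two_right]
      omega
    have bound1 : ∑ k, b k * j k ≤
        ∑ k : Fin N, (d - r - (N - 1 - k.val)) * (r - 1 - (N - 1 - k.val)) := by
      apply Finset.sum_le_sum
      intro k _
      have h1 := key_j k
      have h2 := key_b k
      exact Nat.mul_le_mul (by omega) (by omega)
    have ident : ∀ k : Fin N,
        3 * ((d - r - (N - 1 - k.val)) * (r - 1 - (N - 1 - k.val)))
          + 3 * ((N - 1 - k.val) * (d - 1 - (N - 1 - k.val)))
          = 3 * ((d - r) * (r - 1)) := by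
      intro k
      have h1 := key_j k
      have h2 := key_b k
      have hmB : N - 1 - k.val ≤ r - 1 := by omega
      have hmA : N - 1 - k.val ≤ d - r := by omega
      have hmd : N - 1 - k.val ≤ d - 1 := by omega
      have h1d : 1 ≤ d := by omega
      have hrd1 : r ≤ d := hrd
      zify [hmB, hmA, hmd, h1d, hr, hrd1]
      have hAB : ((d : ℤ) - r) + ((r : ℤ) - 1) = (d : ℤ) - 1 := by ring
      ring
    have hsum3 : ∑ k : Fin N,
        (3 * ((d - r - (N - 1 - k.val)) * (r - 1 - (N - 1 - k.val)))
          + 3 * ((N - 1 - k.val) * (d - 1 - (N - 1 - k.val))))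
        = N * (3 * ((d - r) * (r - 1))) := by
      rw [Finset.sum_congr rfl (fun k _ => ident k)]
      simp [Finset.sum_const, Finset.card_univ, mul_comm]
    have hreflect1 : ∑ k : Fin N, (N - 1 - k.val) * d = ∑ i ∈ Finset.range N, i * d := by
      rw [Fin.sum_univ_eq_sum_range (fun i => (N - 1 - i) * d) N]
      exact Finset.sum_range_reflect (fun i => i * d) N
    have hreflect2 : ∑ k : Fin N, 3 * ((N - 1 - k.val) * (d - 1 - (N - 1 - k.val)))
        = ∑ i ∈ Finset.range N, 3 * (i * (d - 1 - i)) := by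
      rw [Fin.sum_univ_eq_sum_range (fun i => 3 * ((N - 1 - i) * (d - 1 - (N - 1 - i)))) N]
      exact Finset.sum_range_reflect (fun i => 3 * (i * (d - 1 - i))) N
    have hagg := agg_lemma N d hd
    have hchoose2 : Nat.choose N 2 * d = ∑ k : Fin N, (N - 1 - k.val) * d := by
      rw [hchoose, hreflect1, Finset.sum_mul]
    calc 3 * (∑ k, b k * j k) + Nat.choose N 2 * d
        ≤ 3 * (∑ k : Fin N, (d - r - (N - 1 - k.val)) * (r - 1 - (N - 1 - k.val)))
            + ∑ i ∈ Finset.range N, i * d := by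
          rw [hchoose2, hreflect1]
          exact Nat.add_le_add (Nat.mul_le_mul_left 3 bound1) le_rfl
      _ ≤ ∑ k : Fin N, 3 * ((d - r - (N - 1 - k.val)) * (r - 1 - (N - 1 - k.val)))
            + ∑ k : Fin N, 3 * ((N - 1 - k.val) * (d - 1 - (N - 1 - k.val))) := by
          rw [Finset.mul_sum, hreflect2]
          exact Nat.add_le_add le_rfl hagg
      _ = N * (3 * ((d - r) * (r - 1))) := by rw [← Finset.sum_add_distrib]; exact hsum3
      _ = 3 * N * (d - r) * (r - 1) := by ring
  -- Part 3
  have part3 : ∀ σ : Equiv.Perm (Fin N),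
      2 * (∑ k, b k * j k) ≤ 2 * (∑ k, b k * j (σ k)) + N * (d - r) * (r - 1) := by
    intro σ
    have hanti : Antivary b (fun k => j (Fin.rev k)) := by
      intro i i' h
      have h2 : Fin.rev i < Fin.rev i' := hj.lt_iff_lt.mp h
      have h3 : i' < i := by rwa [Fin.rev_lt_rev] at h2
      exact (hb h3).le
    have stepA : ∑ k, b k * j (Fin.rev k) ≤ ∑ k, b k * j (σ k) := by
      have := hanti.sum_mul_le_sum_mul_comp_perm (σ := σ.trans Fin.revPerm)
      simpa [Fin.rev_rev] using this
    have stepB : 2 * (∑ k, b k * j k) ≤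
        2 * (∑ k, b k * j (Fin.rev k)) + N * (d - r) * (r - 1) := by
      rw [← Nat.cast_le (α := ℤ)]
      push_cast
      have hS1rev : ∑ k : Fin N, (b (Fin.rev k) : ℤ) * j (Fin.rev k)
          = ∑ k : Fin N, (b k : ℤ) * j k := by
        have := Equiv.sum_comp (Fin.revPerm : Equiv.Perm (Fin N))
          (fun k => (b k : ℤ) * j k)
        simpa using this
      have hrev : ∑ k : Fin N, (b (Fin.rev k) : ℤ) * j k
          = ∑ k : Fin N, (b k : ℤ) * j (Fin.rev k) := by
        have := Equiv.sum_comp (Fin.revPerm : Equiv.Perm (Fin N))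
          (fun k => (b k : ℤ) * j (Fin.rev k))
        simpa [Fin.rev_rev] using this
      have termB : ∀ k : Fin N,
          (b k : ℤ) * j k + (b (Fin.rev k) : ℤ) * j (Fin.rev k)
          ≤ (b k : ℤ) * j (Fin.rev k) + (b (Fin.rev k) : ℤ) * j k
            + ((d - r : ℕ) : ℤ) * ((r - 1 : ℕ) : ℤ) := by
        intro k
        have c1 : (b k : ℤ) ≤ ((d - r : ℕ) : ℤ) := by exact_mod_cast hbd k
        have c2 : (b (Fin.rev k) : ℤ) ≤ ((d - r : ℕ) : ℤ) := by exact_mod_cast hbd _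
        have c3 : (j k : ℤ) ≤ ((r - 1 : ℕ) : ℤ) := by exact_mod_cast hjr k
        have c4 : (j (Fin.rev k) : ℤ) ≤ ((r - 1 : ℕ) : ℤ) := by exact_mod_cast hjr _
        have n1 : (0 : ℤ) ≤ b k := Int.natCast_nonneg _
        have n2 : (0 : ℤ) ≤ b (Fin.rev k) := Int.natCast_nonneg _
        have n3 : (0 : ℤ) ≤ j k := Int.natCast_nonneg _
        have n4 : (0 : ℤ) ≤ j (Fin.rev k) := Int.natCast_nonneg _
        rcases le_total k (Fin.rev k) with h | h
        · have h1 : (b k : ℤ) ≤ b (Fin.rev k) := by exact_mod_cast hb.monotone h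
          have h2 : (j k : ℤ) ≤ j (Fin.rev k) := by exact_mod_cast hj.monotone h
          nlinarith [mul_le_mul (by linarith : (b (Fin.rev k) : ℤ) - b k ≤ ((d - r : ℕ) : ℤ))
            (by linarith : (j (Fin.rev k) : ℤ) - j k ≤ ((r - 1 : ℕ) : ℤ))
            (by linarith) (by linarith)]
        · have h1 : (b (Fin.rev k) : ℤ) ≤ b k := by exact_mod_cast hb.monotone h
          have h2 : (j (Fin.rev k) : ℤ) ≤ j k := by exact_mod_cast hj.monotone h
          nlinarith [mul_le_mul (by linarith : (b k : ℤ) - b (Fin.rev k) ≤ ((d - r : ℕ) : ℤ))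
            (by linarith : (j k : ℤ) - j (Fin.rev k) ≤ ((r - 1 : ℕ) : ℤ))
            (by linarith) (by linarith)]
      have grand := Finset.sum_le_sum (fun k (_ : k ∈ Finset.univ) => termB k)
      rw [Finset.sum_add_distrib, Finset.sum_add_distrib, Finset.sum_add_distrib,
        hS1rev, hrev, Finset.sum_const, Finset.card_univ, Fintype.card_fin] at grand
      simp only [nsmul_eq_mul] at grand
      linarith
    calc 2 * (∑ k, b k * j k)
        ≤ 2 * (∑ k, b k * j (Fin.rev k)) + N * (d - r) * (r - 1) := stepB
      _ ≤ 2 * (∑ k, b k * j (σ k)) + N * (d - r) * (r - 1) := by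
          exact Nat.add_le_add (Nat.mul_le_mul_left 2 stepA) le_rfl
  exact ⟨part1, part2, part3⟩
end

section
/- Let F be a field, N, r, d natural numbers with 1 ≤ r and r ≤ d, and let j, b : Fin N → ℕ be strictly monotone functions with j k ≤ r − 1 and b k ≤ d − r for all k. For a permutation σ of Fin N set S(σ) := ∑_{k} b k · j (σ k), and let P : Polynomial F be the generalized Vandermonde polynomial P := ∑_{σ ∈ Equiv.Perm (Fin N)} ((Equiv.Perm.sign σ : ℤ) : F) • X ^ S(σ). Then P ≠ 0, the natural degree of P equals S(1) = ∑_{k} b k · j k, and the set of nonzero roots {x : F | x ≠ 0 ∧ P.eval x = 0} is finite of cardinality at most Nat.choose r 2 · (d − r). -/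
/-!
By the strict rearrangement inequality the exponent `∑ k, b k * j (σ k)` is maximised only at
`σ = 1`, so the top monomial `X ^ ∑ k, b k * j k` of `P` appears once, with coefficient
`sign 1 = 1`; hence `P ≠ 0` and its degree is `∑ k, b k * j k`. The `j k` are distinct and
smaller than `r`, so this degree is at most `(d - r) * (0 + 1 + ⋯ + (r - 1)) = (d - r) * r.choose 2`,
which bounds the number of roots.
-/

open Polynomial

theorem StrictMono.sum_mul_comp_perm_lt_sum_mul {ι α : Type*} [LinearOrder ι] [Fintype ι]
    [Semiring α] [LinearOrder α] [IsStrictOrderedRing α] [ExistsAddOfLE α]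
    {b j : ι → α} (hb : StrictMono b) (hj : StrictMono j) {σ : Equiv.Perm ι} (hσ : σ ≠ 1) :
    ∑ k, b k * j (σ k) < ∑ k, b k * j k := by
  refine (hb.monotone.monovary hj.monotone).sum_mul_comp_perm_lt_sum_mul_iff.mpr fun hmv ↦ hσ ?_
  have hσ_mono : Monotone σ := fun _ _ hik ↦ hj.le_iff_le.mp (hb.trans_monovary hmv.symm hik)
  exact Equiv.ext fun k ↦ (hσ_mono.strictMono_of_injective σ.injective).apply_eq

theorem Nat.sum_le_choose_two_of_injective {ι : Type*} [Fintype ι] {j : ι → ℕ}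
    (hj : Function.Injective j) {r : ℕ} (hjr : ∀ k, j k < r) : ∑ k, j k ≤ r.choose 2 := by
  classical
  calc ∑ k, j k = ∑ x ∈ Finset.univ.image j, x :=
        (Finset.sum_image (f := id) fun _ _ _ _ h ↦ hj h).symm
    _ ≤ ∑ x ∈ Finset.range r, x :=
        Finset.sum_le_sum_of_subset fun x hx ↦ by
          obtain ⟨k, -, rfl⟩ := Finset.mem_image.mp hx
          exact Finset.mem_range.mpr (hjr k)
    _ = r.choose 2 := by rw [Finset.sum_range_id, Nat.choose_two_right]

namespace Polynomial

section Semiring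

variable {R ι : Type*} [Semiring R] {s : Finset ι} {c : ι → R} {e : ι → ℕ} {i : ι}

theorem coeff_sum_smul_X_pow_of_lt (hi : i ∈ s) (hmax : ∀ k ∈ s, k ≠ i → e k < e i) :
    (∑ k ∈ s, c k • (X : R[X]) ^ e k).coeff (e i) = c i := by
  rw [finsetSum_coeff, Finset.sum_eq_single_of_mem i hi fun k hk hki ↦ ?_]
  · simp
  · simp [coeff_X_pow, (hmax k hk hki).ne']

theorem natDegree_sum_smul_X_pow_of_lt (hi : i ∈ s) (hmax : ∀ k ∈ s, k ≠ i → e k < e i)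
    (hc : c i ≠ 0) : (∑ k ∈ s, c k • (X : R[X]) ^ e k).natDegree = e i := by
  refine le_antisymm (natDegree_sum_le_of_forall_le s _ fun k hk ↦ ?_)
    (le_natDegree_of_ne_zero (by rwa [coeff_sum_smul_X_pow_of_lt hi hmax]))
  refine (natDegree_smul_le _ _).trans <| (natDegree_X_pow_le _).trans ?_
  obtain rfl | hki := eq_or_ne k i
  exacts [le_rfl, (hmax k hk hki).le]

end Semiring

theorem ncard_setOf_isRoot_le {R : Type*} [CommRing R] [IsDomain R] {p : R[X]} (hp : p ≠ 0) :
    {x | p.IsRoot x}.ncard ≤ p.natDegree := by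
  have hroots : {x | p.IsRoot x} = p.rootSet R := by
    ext x
    simp [mem_rootSet, hp]
  rw [hroots]
  exact ncard_rootSet_le p R

end Polynomial

theorem stmt_15_general (F : Type*) [Field F] (N r d : ℕ) (hr : 1 ≤ r)
    (j b : Fin N → ℕ) (hj : StrictMono j) (hb : StrictMono b)
    (hjr : ∀ k, j k ≤ r - 1) (hbd : ∀ k, b k ≤ d - r)
    (P : Polynomial F)
    (hP : P = ∑ σ : Equiv.Perm (Fin N),
      (((Equiv.Perm.sign σ : ℤ) : F)) • (Polynomial.X : Polynomial F) ^ (∑ k, b k * j (σ k))) :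
    P ≠ 0 ∧ P.natDegree = ∑ k, b k * j k ∧
      {x : F | x ≠ 0 ∧ P.eval x = 0}.Finite ∧
      Set.ncard {x : F | x ≠ 0 ∧ P.eval x = 0} ≤ Nat.choose r 2 * (d - r) := by
  have hmax (σ : Equiv.Perm (Fin N)) (_ : σ ∈ Finset.univ) (hσ : σ ≠ 1) :
      ∑ k, b k * j (σ k) < ∑ k, b k * j ((1 : Equiv.Perm (Fin N)) k) :=
    hb.sum_mul_comp_perm_lt_sum_mul hj hσ
  have hcoeff : P.coeff (∑ k, b k * j k) = 1 := by
    simpa [hP] using coeff_sum_smul_X_pow_of_lt (c := fun σ ↦ ((Equiv.Perm.sign σ : ℤ) : F))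
      (Finset.mem_univ 1) hmax
  have hP0 : P ≠ 0 := fun h ↦ by simp [h] at hcoeff
  have hdeg : P.natDegree = ∑ k, b k * j k := by
    simpa [hP] using natDegree_sum_smul_X_pow_of_lt (c := fun σ ↦ ((Equiv.Perm.sign σ : ℤ) : F))
      (Finset.mem_univ 1) hmax (by simp)
  have hsub : {x : F | x ≠ 0 ∧ P.eval x = 0} ⊆ {x | P.IsRoot x} := fun x hx ↦ hx.2
  have hfin : {x | P.IsRoot x}.Finite := P.finite_setOfPred_isRoot hP0
  have hdeg_le : ∑ k, b k * j k ≤ (d - r) * ∑ k, j k := by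
    rw [Finset.mul_sum]
    exact Finset.sum_le_sum fun k _ ↦ Nat.mul_le_mul_right _ (hbd k)
  have hj_sum : ∑ k, j k ≤ r.choose 2 :=
    Nat.sum_le_choose_two_of_injective hj.injective fun k ↦ by have := hjr k; omega
  refine ⟨hP0, hdeg, hfin.subset hsub, ?_⟩
  calc _ ≤ {x | P.IsRoot x}.ncard := Set.ncard_le_ncard hsub hfin
    _ ≤ P.natDegree := ncard_setOf_isRoot_le hP0
    _ ≤ (d - r) * r.choose 2 := hdeg ▸ hdeg_le.trans (Nat.mul_le_mul_left _ hj_sum)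
    _ = r.choose 2 * (d - r) := Nat.mul_comm _ _

theorem stmt_15 (F : Type*) [Field F] (N r d : ℕ) (hr : 1 ≤ r) (hrd : r ≤ d)
    (j b : Fin N → ℕ) (hj : StrictMono j) (hb : StrictMono b)
    (hjr : ∀ k, j k ≤ r - 1) (hbd : ∀ k, b k ≤ d - r)
    (P : Polynomial F)
    (hP : P = ∑ σ : Equiv.Perm (Fin N),
      (((Equiv.Perm.sign σ : ℤ) : F)) • (Polynomial.X : Polynomial F) ^ (∑ k, b k * j (σ k))) :
    P ≠ 0 ∧ P.natDegree = ∑ k, b k * j k ∧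
      {x : F | x ≠ 0 ∧ P.eval x = 0}.Finite ∧
      Set.ncard {x : F | x ≠ 0 ∧ P.eval x = 0} ≤ Nat.choose r 2 * (d - r) :=
  stmt_15_general F N r d hr j b hj hb hjr hbd P hP
end

section
/- Let r, s be natural numbers with 2 ≤ r and 2 ≤ s, and let F be a field of prime characteristic p. Assume either (Nat.choose (r+s) r · Nat.choose r 2 · (s−1) : Cardinal) < Cardinal.mk F, or (p ^ (Nat.choose r 2 · (s−1)) : Cardinal) < Cardinal.mk F. Then there exists an injective family H : F → Submodule F (Fin (r+s) → F) with finrank (H t) = r for all t, which is an r-uniform strong (s, r·s) subspace design (for every submodule W with finrank W = s and every finite subset T of F, ∑_{t ∈ T} finrank (H t ⊓ W) ≤ r·s), and there exists an injective family G : F → Submodule F (Fin (r+s) → F) with finrank (G t) = s for all t, which is an s-uniform strong (r, s·r) subspace design (for every submodule V with finrank V = r and every finite subset T of F, ∑_{t ∈ T} finrank (G t ⊓ V) ≤ s·r). -/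
/-!
Identify `v : Fin m → F` with `θ v = ∑ k, v k X ^ k` and fix `γ` with `1, γ, …, γ ^ (m - 1)`
pairwise distinct. For `0 < b < m` the subspace `H t` of those `v` with
`∏_{j < b} (X - γ ^ j t) ∣ θ v` has codimension `b`, and it determines `t` through the coefficient
of `X ^ (b - 1)` of that product.

Let `W` have dimension `b` and basis `w`, and let `D(X) = det (θ (w i) (γ ^ j X))_{i, j < b}`.
Multilinearity gives `D = ∑_κ c_κ X ^ (κ 0 + ⋯ + κ (b - 1))`, where `c_κ` is a product of
coordinates of the `w i` times the Vandermonde determinant of the `γ ^ κ i`. For a basis in echelon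
form a single term reaches the top exponent, so `D ≠ 0` and
`deg D ≤ (m - b) b + (0 + 1 + ⋯ + (b - 1))`. A change of basis multiplies `D` by a nonzero
constant; using a basis extending one of `H t ⊓ W`, the corresponding rows vanish at `X = t`, so
`(X - t) ^ dim (H t ⊓ W)` divides `D`. At `t = 0`, where all nodes collapse, the rows from `H 0`
only involve the coordinates `≥ b`, and the expansion shows that even
`X ^ (dim (H 0 ⊓ W) + 0 + 1 + ⋯ + (b - 1))` divides `D`. Counting roots of `D` bounds
`∑ t, dim (H t ⊓ W)` by `(m - b) b`.

Such a `γ` exists unless `F` is finite with `|F| ≤ r + s`; then the hypothesis on `|F|` leaves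
only `|F| = 4` and `r = s = 2`, where the graphs of the maps `x ↦ t x` on `F²` pairwise meet
trivially.
-/

open Module Polynomial Finset Function

namespace SubspaceDesign

section Counting

theorem sum_range_add_card_filter_le_sum (S : Finset ℕ) :
    ∑ i ∈ range #S, i + #{x ∈ S | #S ≤ x} ≤ ∑ x ∈ S, x := by
  refine Finset.induction_on_max S (by simp) fun a S hlt ih => ?_
  have ha : a ∉ S := fun h => lt_irrefl a (hlt a h)
  have hSa : #S ≤ a := by
    simpa using card_le_card (fun x hx => mem_range.2 (hlt x hx) : S ⊆ range a)
  have hmono : #{x ∈ S | #S + 1 ≤ x} ≤ #{x ∈ S | #S ≤ x} :=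
    card_le_card fun x hx => by
      simp only [mem_filter] at hx ⊢
      exact ⟨hx.1, by omega⟩
  have hfilter : #{x ∈ insert a S | #S + 1 ≤ x} ≤
      #{x ∈ S | #S ≤ x} + if #S + 1 ≤ a then 1 else 0 := by
    rw [filter_insert]
    split_ifs
    · exact (card_insert_le _ _).trans (by omega)
    · omega
  rw [card_insert_of_notMem ha, sum_insert ha, sum_range_succ]
  split_ifs at hfilter <;> omega

theorem sum_range_add_card_le_sum {n : ℕ} {κ : Fin n → ℕ} (hκ : Injective κ)
    {s : Finset (Fin n)} (hs : ∀ i ∈ s, n ≤ κ i) :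
    ∑ i ∈ range n, i + #s ≤ ∑ i, κ i := by
  have hcard : #(univ.image κ) = n := by simp [card_image_of_injective _ hκ]
  have hs' : #s ≤ #{x ∈ univ.image κ | n ≤ x} :=
    card_le_card_of_injOn κ (fun i hi => by simp [hs i hi]) hκ.injOn
  have := sum_range_add_card_filter_le_sum (univ.image κ)
  rw [hcard, sum_image hκ.injOn] at this
  omega

theorem sum_le_mul_add_sum_range {n m : ℕ} {d : Fin n → Fin m} (hd : Injective d) :
    ∑ i, (d i : ℕ) ≤ n * (m - n) + ∑ i ∈ range n, i := by
  rcases Nat.eq_zero_or_pos n with rfl | hn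
  · simp
  have hnm : n ≤ m := by simpa using Fintype.card_le_of_injective d hd
  have hrefl := sum_range_add_card_le_sum (κ := fun i => m - 1 - d i) (s := ∅)
    (fun i j h => hd (Fin.ext (by have := (d i).isLt; have := (d j).isLt; dsimp only at h; omega)))
    (by simp)
  have hsum : ∑ i, (d i : ℕ) + ∑ i, (m - 1 - d i) = n * (m - 1) := by
    rw [← sum_add_distrib, sum_congr rfl fun i _ =>
      (by have := (d i).isLt; omega : (d i : ℕ) + (m - 1 - d i) = m - 1)]
    simp
  have hsplit : n * (m - 1) = n * (m - n) + n * (n - 1) := by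
    rw [← Nat.mul_add]; congr 1; omega
  have := sum_range_id_mul_two n
  simp only [card_empty] at hrefl
  omega

end Counting

section Determinants

variable {R : Type*} [CommRing R] {n m : Type*} [Fintype n] [DecidableEq n] [Fintype m]

theorem det_mul_eq_sum_prod_mul_det_submatrix (A : Matrix n m R) (B : Matrix m n R) :
    (A * B).det = ∑ κ : n → m, (∏ i, A i (κ i)) * (B.submatrix κ id).det := by
  let D : (n → R) [⋀^n]→ₗ[R] R := Matrix.detRowAlternating
  have hrows : A * B = fun i => ∑ k, A i k • B k := by
    ext i j
    simp [Matrix.mul_apply, Finset.sum_apply]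
  calc (A * B).det = D (fun i => ∑ k, A i k • B k) := by rw [hrows]; rfl
    _ = ∑ κ : n → m, D (fun i => A i (κ i) • B (κ i)) :=
      D.toMultilinearMap.map_sum fun i k => A i k • B k
    _ = _ := sum_congr rfl fun κ _ => D.toMultilinearMap.map_smul_univ _ _

theorem pow_card_dvd_det_of_dvd_rows (M : Matrix n n R) (x : R) (s : Finset n)
    (h : ∀ i ∈ s, ∀ j, x ∣ M i j) : x ^ #s ∣ M.det := by
  choose! N hN using h
  have hM : M = Matrix.of fun i j =>
      (if i ∈ s then x else 1) * (Matrix.of fun i j => if i ∈ s then N i j else M i j) i j := by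
    ext i j
    by_cases hi : i ∈ s <;> simp [hi, hN]
  rw [hM, Matrix.det_mul_column, prod_ite_mem, univ_inter, prod_const]
  exact dvd_mul_right _ _

end Determinants

section FoldPoly

variable {F : Type*} [Field F]

noncomputable def foldPoly (b : ℕ) (γ t : F) : F[X] :=
  ∏ j : Fin b, (X - C (γ ^ (j : ℕ) * t))

variable {b m : ℕ} {γ t : F}

theorem monic_foldPoly : (foldPoly b γ t).Monic :=
  monic_prod_of_monic _ _ fun _ _ => monic_X_sub_C _

theorem natDegree_foldPoly : (foldPoly b γ t).natDegree = b := by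
  rw [foldPoly, natDegree_finsetProd_X_sub_C_eq_card, card_univ, Fintype.card_fin]

theorem foldPoly_zero : foldPoly b γ 0 = X ^ b := by
  simp [foldPoly]

theorem foldPoly_isRoot (j : Fin b) : (foldPoly b γ t).IsRoot (γ ^ (j : ℕ) * t) := by
  simp [foldPoly, IsRoot, eval_prod, prod_eq_zero (mem_univ j)]

theorem coeff_foldPoly_pred (hb : 0 < b) :
    (foldPoly b γ t).coeff (b - 1) = -((∑ j : Fin b, γ ^ (j : ℕ)) * t) := by
  have := prod_X_sub_C_coeff_card_pred univ (fun j : Fin b => γ ^ (j : ℕ) * t) (by simpa)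
  simpa [foldPoly, sum_mul] using this

variable [DecidableEq F]

theorem finrank_ker_modByMonicHom_comp_ofFn {Q : F[X]} (hQ : Q.Monic) (hm : Q.natDegree ≤ m) :
    finrank F (LinearMap.ker (modByMonicHom Q ∘ₗ ofFn m)) = m - Q.natDegree := by
  have hdeg : Q.degree = Q.natDegree := degree_eq_natDegree hQ.ne_zero
  have hrange : LinearMap.range (modByMonicHom Q ∘ₗ ofFn m) = degreeLT F Q.natDegree := by
    apply le_antisymm
    · rintro _ ⟨v, rfl⟩
      rw [mem_degreeLT, ← hdeg]
      exact degree_modByMonic_lt _ hQ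
    · intro g hg
      rw [mem_degreeLT] at hg
      have hgm : g.degree < m := hg.trans_le (by exact_mod_cast hm)
      have hg' : ofFn m (toFn m g) = g := by
        ext i
        by_cases hi : i < m
        · simp [hi, toFn]
        · rw [ofFn_coeff_eq_zero_of_ge _ (not_lt.1 hi),
            coeff_eq_zero_of_degree_lt (hgm.trans_le (by exact_mod_cast not_lt.1 hi))]
      refine ⟨toFn m g, ?_⟩
      rw [LinearMap.comp_apply, hg', modByMonicHom_apply,
        (modByMonic_eq_self_iff hQ).2 (hdeg ▸ hg)]
  have := (modByMonicHom Q ∘ₗ ofFn m).finrank_range_add_finrank_ker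
  rw [hrange, (degreeLTEquiv F _).finrank_eq, finrank_fin_fun, finrank_fin_fun] at this
  omega

noncomputable def foldSubspace (b m : ℕ) (γ t : F) : Submodule F (Fin m → F) :=
  LinearMap.ker (modByMonicHom (foldPoly b γ t) ∘ₗ ofFn m)

theorem mem_foldSubspace {v : Fin m → F} :
    v ∈ foldSubspace b m γ t ↔ foldPoly b γ t ∣ ofFn m v := by
  simp [foldSubspace, modByMonic_eq_zero_iff_dvd monic_foldPoly]

theorem finrank_foldSubspace (hb : b ≤ m) : finrank F (foldSubspace b m γ t) = m - b := by
  rw [foldSubspace, finrank_ker_modByMonicHom_comp_ofFn monic_foldPoly, natDegree_foldPoly]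
  rwa [natDegree_foldPoly]

theorem foldSubspace_injective (hb : 0 < b) (hbm : b < m) (hγ : γ ^ b ≠ 1) :
    Injective (foldSubspace b m γ) := by
  intro t t' h
  have hofFn : ∀ t : F, ofFn m (toFn m (foldPoly b γ t)) = foldPoly b γ t := fun t =>
    ofFn_comp_toFn_eq_id_of_natDegree_lt (natDegree_foldPoly.trans_lt hbm)
  have hdvd : foldPoly b γ t' ∣ foldPoly b γ t := by
    have hmem : toFn m (foldPoly b γ t) ∈ foldSubspace b m γ t := by
      rw [mem_foldSubspace, hofFn]
    rwa [h, mem_foldSubspace, hofFn] at hmem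
  have heq := eq_of_monic_of_dvd_of_natDegree_le monic_foldPoly monic_foldPoly hdvd
    (by rw [natDegree_foldPoly, natDegree_foldPoly])
  have hσ : ∑ j : Fin b, γ ^ (j : ℕ) ≠ 0 := by
    rw [Fin.sum_univ_eq_sum_range (γ ^ ·) b]
    intro h0
    have := geom_sum_mul γ b
    rw [h0, zero_mul] at this
    exact hγ (by linear_combination -this)
  have hcoeff := congrArg (coeff · (b - 1)) heq
  simp only [coeff_foldPoly_pred hb, neg_inj] at hcoeff
  exact mul_left_cancel₀ hσ hcoeff

end FoldPoly

section FoldMatrix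

variable {F : Type*} [Field F] {b m : ℕ}

noncomputable def powerMatrix (γ : F) (m b : ℕ) : Matrix (Fin m) (Fin b) F[X] :=
  Matrix.of fun k j => X ^ (k : ℕ) * C ((γ ^ (k : ℕ)) ^ (j : ℕ))

noncomputable def foldMatrix (γ : F) (w : Fin b → Fin m → F) : Matrix (Fin b) (Fin b) F[X] :=
  (Matrix.of w).map C * powerMatrix γ m b

noncomputable def foldCoeff (γ : F) (w : Fin b → Fin m → F) (κ : Fin b → Fin m) : F :=
  (∏ i, w i (κ i)) * (Matrix.vandermonde fun i => γ ^ (κ i : ℕ)).det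

variable {γ : F} {w : Fin b → Fin m → F}

theorem eval_foldMatrix [DecidableEq F] (t : F) (i j : Fin b) :
    (foldMatrix γ w i j).eval t = (ofFn m (w i)).eval (γ ^ (j : ℕ) * t) := by
  simp only [foldMatrix, powerMatrix, Matrix.mul_apply, Matrix.map_apply, Matrix.of_apply,
    eval_finsetSum, ofFn_eq_sum_monomial, eval_monomial, eval_mul, eval_C, eval_pow, eval_X]
  exact sum_congr rfl fun k _ => by ring

theorem det_foldMatrix :
    (foldMatrix γ w).det =
      ∑ κ : Fin b → Fin m, C (foldCoeff γ w κ) * X ^ ∑ i, (κ i : ℕ) := by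
  rw [foldMatrix, det_mul_eq_sum_prod_mul_det_submatrix]
  refine sum_congr rfl fun κ _ => ?_
  have hsub : (powerMatrix γ m b).submatrix κ id = Matrix.of fun i j =>
      X ^ (κ i : ℕ) * (Matrix.vandermonde fun i => γ ^ (κ i : ℕ)).map C i j := by
    ext i j
    simp [powerMatrix, Matrix.vandermonde]
  rw [hsub, Matrix.det_mul_column, ← RingHom.mapMatrix_apply, ← RingHom.map_det, foldCoeff,
    prod_pow_eq_pow_sum]
  simp only [Matrix.map_apply, Matrix.of_apply, map_mul, map_prod]
  ring

theorem foldCoeff_ne_zero {κ : Fin b → Fin m} (h : foldCoeff γ w κ ≠ 0) :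
    Injective κ ∧ ∀ i, w i (κ i) ≠ 0 := by
  obtain ⟨hw, hV⟩ := mul_ne_zero_iff.1 h
  refine ⟨fun i j hij => Matrix.det_vandermonde_ne_zero_iff.1 hV (by simp [hij]), fun i => ?_⟩
  exact (prod_ne_zero_iff.1 hw) i (mem_univ i)

section Pivots

variable {d : Fin b → Fin m}

theorem le_of_foldCoeff_ne_zero (hpiv : ∀ i k, d i < k → w i k = 0) {κ : Fin b → Fin m}
    (h : foldCoeff γ w κ ≠ 0) (i : Fin b) : κ i ≤ d i :=
  not_lt.1 fun hlt => (foldCoeff_ne_zero h).2 i (hpiv i _ hlt)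

theorem natDegree_det_foldMatrix_le (hpiv : ∀ i k, d i < k → w i k = 0) :
    (foldMatrix γ w).det.natDegree ≤ ∑ i, (d i : ℕ) := by
  rw [det_foldMatrix]
  refine natDegree_sum_le_of_forall_le _ _ fun κ _ => ?_
  by_cases h : foldCoeff γ w κ = 0
  · simp [h]
  · exact (natDegree_C_mul_X_pow_le _ _).trans
      (sum_le_sum fun i _ => le_of_foldCoeff_ne_zero hpiv h i)

theorem det_foldMatrix_ne_zero (hpiv : ∀ i k, d i < k → w i k = 0)
    (hγ : Set.InjOn (γ ^ ·) (Set.Iio m)) (hd : Injective d) (hlead : ∀ i, w i (d i) ≠ 0) :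
    (foldMatrix γ w).det ≠ 0 := by
  have hcoeff : (foldMatrix γ w).det.coeff (∑ i, (d i : ℕ)) = foldCoeff γ w d := by
    rw [det_foldMatrix, finsetSum_coeff, sum_eq_single d]
    · simp
    · intro κ _ hκ
      rw [coeff_C_mul_X_pow]
      by_cases h : foldCoeff γ w κ = 0
      · simp [h]
      · obtain ⟨i, hi⟩ := Function.ne_iff.1 hκ
        have hlt : ∑ i, (κ i : ℕ) < ∑ i, (d i : ℕ) :=
          sum_lt_sum (fun i _ => le_of_foldCoeff_ne_zero hpiv h i)
            ⟨i, mem_univ i,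
              lt_of_le_of_ne (le_of_foldCoeff_ne_zero hpiv h i) (Fin.val_ne_of_ne hi)⟩
        rw [if_neg hlt.ne']
    · simp
  have hV : (Matrix.vandermonde fun i => γ ^ (d i : ℕ)).det ≠ 0 :=
    Matrix.det_vandermonde_ne_zero_iff.2 fun i j hij =>
      hd (Fin.ext (hγ (d i).isLt (d j).isLt hij))
  intro h0
  rw [h0, coeff_zero] at hcoeff
  exact mul_ne_zero (prod_ne_zero_iff.2 fun i _ => hlead i) hV hcoeff.symm

end Pivots

end FoldMatrix

section Bases

variable {F : Type*} [Field F] {n : ℕ}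

theorem exists_basis_of_le {V : Type*} [AddCommGroup V] [Module F V] {U W : Submodule F V}
    [FiniteDimensional F W] (hUW : U ≤ W) (hW : finrank F W = n) :
    ∃ (w : Basis (Fin n) F W) (s : Finset (Fin n)),
      #s = finrank F U ∧ ∀ i ∈ s, (w i : V) ∈ U := by
  classical
  let U' := U.comap W.subtype
  let v : Fin (finrank F U') → W := fun i => finBasis F U' i
  have hv : LinearIndependent F v :=
    (finBasis F U').linearIndependent.map' U'.subtype (Submodule.ker_subtype _)
  let B := Basis.sumExtend hv
  have := Module.Finite.finite_basis B
  have := Fintype.ofFinite (Fin (finrank F U') ⊕ Basis.sumExtendIndex hv)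
  let e := Fintype.equivFinOfCardEq (by rw [← finrank_eq_card_basis B, hW])
  have hBv : ∀ i, B (Sum.inl i) = v i := fun i => by
    simp only [B, Basis.sumExtend, Equiv.trans_def, Basis.coe_reindex, Basis.coe_extend,
      comp_apply]
    rfl
  refine ⟨B.reindex e, univ.map (Embedding.inl.trans e.toEmbedding), ?_, ?_⟩
  · simpa using (Submodule.comapSubtypeEquivOfLe hUW).finrank_eq
  · simp only [mem_map, mem_univ, true_and, Embedding.trans_apply, Embedding.inl_apply,
      Equiv.coe_toEmbedding]
    rintro _ ⟨i, rfl⟩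
    rw [Basis.reindex_apply, Equiv.symm_apply_apply, hBv]
    exact (finBasis F U' i).2

theorem exists_last_ne_zero {ι M : Type*} [Fintype ι] [LinearOrder ι] [Zero M] {v : ι → M}
    (hv : v ≠ 0) : ∃ k, v k ≠ 0 ∧ ∀ l, k < l → v l = 0 := by
  classical
  have hsupp : ({k | v k ≠ 0} : Finset ι).Nonempty := by
    obtain ⟨k, hk⟩ := Function.ne_iff.1 hv
    exact ⟨k, by simpa using hk⟩
  refine ⟨_, (mem_filter.1 (max'_mem _ hsupp)).2, fun l hl => ?_⟩
  by_contra h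
  exact not_le.2 hl (le_max' _ l (by simpa using h))

theorem linearIndependent_of_pivots {m : ℕ} {v : Fin n → Fin m → F} {d : Fin n → Fin m}
    (hd : StrictMono d) (hlead : ∀ i, v i (d i) ≠ 0) (hpiv : ∀ i l, d i < l → v i l = 0) :
    LinearIndependent F v := by
  refine LinearIndependent.of_comp (LinearMap.funLeft F F d) ?_
  have htri : (Matrix.of fun i j => v i (d j)).IsLowerTriangular :=
    fun i j hij => hpiv i _ (hd hij)
  refine Matrix.linearIndependent_rows_of_det_ne_zero
    (?_ : (Matrix.of fun i j => v i (d j)).det ≠ 0)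
  rw [Matrix.det_of_isLowerTriangular _ htri]
  exact prod_ne_zero_iff.2 fun i _ => hlead i

variable {m : ℕ}

open Classical in
noncomputable def pivots (W : Submodule F (Fin m → F)) : Finset (Fin m) :=
  {k | ∃ v ∈ W, v k ≠ 0 ∧ ∀ l, k < l → v l = 0}

theorem mem_pivots {W : Submodule F (Fin m → F)} {k : Fin m} :
    k ∈ pivots W ↔ ∃ v ∈ W, v k ≠ 0 ∧ ∀ l, k < l → v l = 0 := by
  simp [pivots]

theorem finrank_le_card_pivots (W : Submodule F (Fin m → F)) : finrank F W ≤ #(pivots W) := by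
  let ρ : W →ₗ[F] pivots W → F := LinearMap.funLeft F F Subtype.val ∘ₗ W.subtype
  have hρ : Injective ρ := by
    rw [← LinearMap.ker_eq_bot, eq_bot_iff]
    rintro ⟨v, hvW⟩ hv
    rw [Submodule.mem_bot]
    by_contra hne
    obtain ⟨k, hk, hlast⟩ := exists_last_ne_zero fun h => hne (Subtype.ext h)
    exact hk (congrFun (LinearMap.mem_ker.1 hv) ⟨k, mem_pivots.2 ⟨v, hvW, hk, hlast⟩⟩)
  simpa using LinearMap.finrank_le_finrank_of_injective hρ

theorem exists_basis_pivot {W : Submodule F (Fin m → F)} (hW : finrank F W = n) :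
    ∃ (w : Basis (Fin n) F W) (d : Fin n → Fin m), Injective d ∧
      (∀ i, (w i : Fin m → F) (d i) ≠ 0) ∧
      ∀ i k, d i < k → (w i : Fin m → F) k = 0 := by
  obtain ⟨P, hP, hcard⟩ := exists_subset_card_eq (hW ▸ finrank_le_card_pivots W)
  let d := P.orderEmbOfFin hcard
  choose v hvW hlead hpiv using fun i => mem_pivots.1 (hP (P.orderEmbOfFin_mem hcard i))
  have hli : LinearIndependent F fun i => (⟨v i, hvW i⟩ : W) :=
    .of_comp W.subtype (linearIndependent_of_pivots d.strictMono hlead hpiv)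
  exact ⟨basisOfLinearIndependentOfCardEqFinrank' _ hli (by simp [hW]), d, d.injective,
    by simpa using hlead, by simpa using hpiv⟩

end Bases

section Design

variable {F : Type*} [Field F] {n m : ℕ} {W : Submodule F (Fin m → F)} {γ : F}

theorem det_foldMatrix_basis (b₀ b₁ : Basis (Fin n) F W) :
    (foldMatrix γ fun i => (b₁ i : Fin m → F)).det =
      C (b₀.det b₁) * (foldMatrix γ fun i => (b₀ i : Fin m → F)).det := by
  have hrows : (Matrix.of fun i => (b₁ i : Fin m → F)) =
      (b₀.toMatrix b₁).transpose * Matrix.of fun i => (b₀ i : Fin m → F) := by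
    ext i k
    simp only [Matrix.of_apply, Matrix.mul_apply, Matrix.transpose_apply, Basis.toMatrix_apply]
    have := congrArg (fun x : W => (x : Fin m → F) k) (b₀.sum_repr (b₁ i))
    simp only [Submodule.coe_sum, Submodule.coe_smul, Finset.sum_apply, Pi.smul_apply,
      smul_eq_mul] at this
    exact this.symm
  rw [foldMatrix, foldMatrix, hrows, Matrix.map_mul, Matrix.mul_assoc, Matrix.det_mul,
    ← RingHom.mapMatrix_apply, ← RingHom.map_det, Matrix.det_transpose, Basis.det_apply]

theorem dvd_det_foldMatrix_of_basis {p : F[X]} (b₀ b₁ : Basis (Fin n) F W)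
    (h : p ∣ (foldMatrix γ fun i => (b₁ i : Fin m → F)).det) :
    p ∣ (foldMatrix γ fun i => (b₀ i : Fin m → F)).det := by
  rw [det_foldMatrix_basis b₀ b₁] at h
  exact (isUnit_C.2 (b₀.isUnit_det b₁)).dvd_mul_left.1 h

theorem sum_le_natDegree_of_pow_dvd {p : F[X]} (hp : p ≠ 0) (S : Finset F) (e : F → ℕ)
    (h : ∀ t ∈ S, (X - C t) ^ e t ∣ p) : ∑ t ∈ S, e t ≤ p.natDegree := by
  have hprod : ∏ t ∈ S, (X - C t) ^ e t ∣ p := prod_dvd_of_coprime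
    (fun t _ t' _ hne => (isCoprime_X_sub_C_of_isUnit_sub (sub_ne_zero.2 hne).isUnit).pow) h
  have := natDegree_le_of_dvd hprod hp
  rw [natDegree_prod_of_monic _ _ fun t _ => (monic_X_sub_C t).pow _] at this
  simpa using this

variable [DecidableEq F]

theorem pow_finrank_dvd_det_foldMatrix (t : F) (w : Basis (Fin n) F W) :
    (X - C t) ^ finrank F (foldSubspace n m γ t ⊓ W : Submodule F (Fin m → F)) ∣
      (foldMatrix γ fun i => (w i : Fin m → F)).det := by
  obtain ⟨w', s, hs, hmem⟩ := exists_basis_of_le inf_le_right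
    ((finrank_eq_card_basis w).trans (Fintype.card_fin n))
  rw [← hs]
  refine dvd_det_foldMatrix_of_basis w w' (pow_card_dvd_det_of_dvd_rows _ _ s fun i hi j => ?_)
  obtain ⟨q, hq⟩ := mem_foldSubspace.1 (hmem i hi).1
  rw [dvd_iff_isRoot, IsRoot, eval_foldMatrix, hq, eval_mul, foldPoly_isRoot j, zero_mul]

theorem X_pow_dvd_det_foldMatrix (w : Basis (Fin n) F W) :
    X ^ (∑ i ∈ range n, i +
        finrank F (foldSubspace n m γ 0 ⊓ W : Submodule F (Fin m → F))) ∣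
      (foldMatrix γ fun i => (w i : Fin m → F)).det := by
  obtain ⟨w', s, hs, hmem⟩ := exists_basis_of_le inf_le_right
    ((finrank_eq_card_basis w).trans (Fintype.card_fin n))
  rw [← hs]
  refine dvd_det_foldMatrix_of_basis w w' ?_
  have hzero : ∀ i ∈ s, ∀ k : Fin m, (k : ℕ) < n → (w' i : Fin m → F) k = 0 := by
    intro i hi k hk
    have := mem_foldSubspace.1 (hmem i hi).1
    rw [foldPoly_zero, X_pow_dvd_iff] at this
    simpa using this k hk
  rw [det_foldMatrix]
  refine dvd_sum fun κ _ => ?_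
  by_cases h : foldCoeff γ (fun i => (w' i : Fin m → F)) κ = 0
  · simp [h]
  obtain ⟨hκ, hw⟩ := foldCoeff_ne_zero h
  have hsum := sum_range_add_card_le_sum (κ := fun i => (κ i : ℕ)) (Fin.val_injective.comp hκ)
    (s := s) fun i hi => not_lt.1 fun hlt => hw i (hzero i hi _ hlt)
  exact (pow_dvd_pow X hsum).mul_left _

theorem sum_finrank_foldSubspace_inf_le (hγ : Set.InjOn (γ ^ ·) (Set.Iio m))
    (hW : finrank F W = n) (T : Finset F) :
    ∑ t ∈ T, finrank F (foldSubspace n m γ t ⊓ W : Submodule F (Fin m → F)) ≤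
      (m - n) * n := by
  obtain ⟨w, d, hd, hlead, hpiv⟩ := exists_basis_pivot hW
  set c : F → ℕ := fun t => finrank F (foldSubspace n m γ t ⊓ W : Submodule F (Fin m → F))
  set D := (foldMatrix γ fun i => (w i : Fin m → F)).det
  -- The extra factor `X ^ (0 + 1 + ⋯ + (n - 1))` at `t = 0` is exactly the excess of the
  -- degree bound `natDegree D ≤ (m - n) * n + (0 + 1 + ⋯ + (n - 1))` over `(m - n) * n`.
  have hdvd : ∀ t ∈ insert 0 T,
      (X - C t) ^ (c t + if t = 0 then ∑ i ∈ range n, i else 0) ∣ D := by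
    intro t _
    split_ifs with ht
    · subst ht
      simpa [add_comm] using X_pow_dvd_det_foldMatrix w
    · simpa using pow_finrank_dvd_det_foldMatrix t w
  have hdeg := sum_le_natDegree_of_pow_dvd (det_foldMatrix_ne_zero hpiv hγ hd hlead) _ _ hdvd
  rw [sum_add_distrib, sum_ite_eq', if_pos (mem_insert_self 0 T)] at hdeg
  have hsub : ∑ t ∈ T, c t ≤ ∑ t ∈ insert 0 T, c t :=
    sum_le_sum_of_subset (subset_insert _ _)
  have := natDegree_det_foldMatrix_le (γ := γ) hpiv
  have := sum_le_mul_add_sum_range hd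
  show ∑ t ∈ T, c t ≤ (m - n) * n
  rw [mul_comm]
  omega

end Design

theorem exists_strong_design {F : Type*} [Field F] {a b m : ℕ} (ha : 0 < a) (hb : 0 < b)
    (hm : a + b = m) {γ : F} (hγ : Set.InjOn (γ ^ ·) (Set.Iio m)) :
    ∃ H : F → Submodule F (Fin m → F), Injective H ∧ (∀ t, finrank F (H t) = a) ∧
      ∀ W : Submodule F (Fin m → F), finrank F W = b → ∀ T : Finset F,
        ∑ t ∈ T, finrank F (H t ⊓ W : Submodule F (Fin m → F)) ≤ a * b := by
  classical
  have hγb : γ ^ b ≠ 1 := fun h =>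
    hb.ne' (hγ (Set.mem_Iio.2 (by omega)) (Set.mem_Iio.2 (by omega)) (by simpa using h))
  refine ⟨foldSubspace b m γ, foldSubspace_injective hb (by omega) hγb,
    fun t => by rw [finrank_foldSubspace (by omega)]; omega, fun W hW T => ?_⟩
  simpa [show m - b = a by omega] using sum_finrank_foldSubspace_inf_le hγ hW T

section Nodes

variable {F : Type*} [Field F]

theorem pow_injOn_Iio_of_pow_ne_one {γ : F} (h0 : γ ≠ 0) {m : ℕ}
    (h : ∀ k, 0 < k → k < m → γ ^ k ≠ 1) : Set.InjOn (γ ^ ·) (Set.Iio m) := by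
  intro i hi j hj hij
  by_contra hne
  wlog hlt : i < j generalizing i j
  · exact this hj hi hij.symm (Ne.symm hne) (by omega)
  apply h (j - i) (by omega) ((Nat.sub_le j i).trans_lt hj)
  apply mul_left_cancel₀ (pow_ne_zero i h0)
  rw [pow_mul_pow_sub γ hlt.le, mul_one]
  exact hij.symm

theorem exists_pow_injOn_Iio_or_card_le (F : Type*) [Field F] (m : ℕ) :
    (∃ γ : F, Set.InjOn (γ ^ ·) (Set.Iio m)) ∨ (Finite F ∧ Nat.card F ≤ m) := by
  rcases finite_or_infinite F with hF | hF
  · by_cases hm : Nat.card F ≤ m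
    · exact Or.inr ⟨hF, hm⟩
    obtain ⟨g, hg⟩ := IsCyclic.exists_ofOrder_eq_natCard (α := Fˣ)
    refine Or.inl ⟨g, pow_injOn_Iio_orderOf.mono fun k hk => ?_⟩
    rw [Set.mem_Iio, orderOf_units, hg, Nat.card_units]
    rw [Set.mem_Iio] at hk
    omega
  · classical
    obtain ⟨γ, hγ⟩ := Infinite.exists_notMem_finset
      (insert 0 ((range m).biUnion fun k => (nthRoots (k + 1) (1 : F)).toFinset))
    simp only [mem_insert, mem_biUnion, mem_range, Multiset.mem_toFinset, mem_nthRoots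
      (Nat.succ_pos _), not_or, not_exists, not_and] at hγ
    refine Or.inl ⟨γ, pow_injOn_Iio_of_pow_ne_one hγ.1 fun k hk hkm => ?_⟩
    simpa [Nat.sub_add_cancel hk] using hγ.2 (k - 1) (by omega)

end Nodes

section SmallFields

variable {F : Type*} [Field F]

theorem sum_finrank_inf_le_of_pairwise_disjoint {V ι : Type*} [AddCommGroup V] [Module F V]
    [FiniteDimensional F V] {H : ι → Submodule F V} (hH : Pairwise (Disjoint on H)) {n : ℕ}
    (hdim : ∀ t, finrank F (H t) = n) {W : Submodule F V} (hW : finrank F W = n) (T : Finset ι) :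
    ∑ t ∈ T, finrank F (H t ⊓ W : Submodule F V) ≤ max n ((n - 1) * #T) := by
  by_cases hex : ∃ t₀ ∈ T, H t₀ = W
  · obtain ⟨t₀, ht₀, rfl⟩ := hex
    rw [sum_eq_single_of_mem t₀ ht₀ fun t _ ht => by rw [disjoint_iff.1 (hH ht), finrank_bot],
      inf_idem, hdim]
    exact le_max_left _ _
  push Not at hex
  refine (sum_le_card_nsmul T _ (n - 1) fun t ht => ?_).trans ?_
  · by_contra! hlt
    have hle := Submodule.finrank_mono (inf_le_left : H t ⊓ W ≤ H t)
    have := hdim t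
    have h1 := Submodule.eq_of_le_of_finrank_eq (inf_le_left : H t ⊓ W ≤ H t) (by omega)
    have h2 := Submodule.eq_of_le_of_finrank_eq (inf_le_right : H t ⊓ W ≤ W) (by omega)
    exact hex t ht (h1.symm.trans h2)
  · rw [smul_eq_mul, mul_comm]
    exact le_max_right _ _

noncomputable def graphMap (n : ℕ) (t : F) : (Fin n → F) →ₗ[F] Fin (n + n) → F :=
  LinearMap.pi (Fin.addCases (fun j => LinearMap.proj j) fun j => t • LinearMap.proj j)

@[simp] theorem graphMap_castAdd (n : ℕ) (t : F) (x : Fin n → F) (j : Fin n) :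
    graphMap n t x (Fin.castAdd n j) = x j := by
  simp [graphMap]

@[simp] theorem graphMap_natAdd (n : ℕ) (t : F) (x : Fin n → F) (j : Fin n) :
    graphMap n t x (Fin.natAdd n j) = t * x j := by
  rw [graphMap, LinearMap.pi_apply, Fin.addCases_right]
  rfl

theorem injective_graphMap (n : ℕ) (t : F) : Injective (graphMap n t) := fun x y h => by
  ext j
  simpa using congrFun h (Fin.castAdd n j)

theorem finrank_range_graphMap (n : ℕ) (t : F) :
    finrank F (LinearMap.range (graphMap n t)) = n := by
  rw [LinearMap.finrank_range_of_inj (injective_graphMap n t), finrank_fin_fun]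

theorem pairwise_disjoint_range_graphMap (n : ℕ) :
    Pairwise (Disjoint on fun t : F => LinearMap.range (graphMap n t)) := by
  intro t t' hne
  rw [Function.onFun, Submodule.disjoint_def]
  rintro _ ⟨x, rfl⟩ ⟨y, hxy⟩
  have hx : x = y := funext fun j => by simpa using (congrFun hxy (Fin.castAdd n j)).symm
  subst hx
  have hzero : x = 0 := funext fun j => by
    have := congrFun hxy (Fin.natAdd n j)
    simp only [graphMap_natAdd] at this
    exact (mul_eq_zero.1 (by linear_combination this : (t' - t) * x j = 0)).resolve_left
      (sub_ne_zero.2 (Ne.symm hne))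
  simp [hzero]

theorem exists_design_of_card_le_four [Finite F] (hF : Nat.card F ≤ 4) :
    ∃ H : F → Submodule F (Fin (2 + 2) → F), Injective H ∧ (∀ t, finrank F (H t) = 2) ∧
      ∀ W : Submodule F (Fin (2 + 2) → F), finrank F W = 2 → ∀ T : Finset F,
        ∑ t ∈ T, finrank F (H t ⊓ W : Submodule F (Fin (2 + 2) → F)) ≤ 2 * 2 := by
  have hH := pairwise_disjoint_range_graphMap (F := F) 2
  refine ⟨fun t => LinearMap.range (graphMap 2 t), fun t t' h => ?_, finrank_range_graphMap 2,
    fun W hW T =>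
      (sum_finrank_inf_le_of_pairwise_disjoint hH (finrank_range_graphMap 2) hW T).trans ?_⟩
  · by_contra hne
    replace h : LinearMap.range (graphMap 2 t) = LinearMap.range (graphMap 2 t') := h
    have := hH hne
    rw [Function.onFun, h, disjoint_self] at this
    have h2 := finrank_range_graphMap (F := F) 2 t'
    rw [this, finrank_bot] at h2
    exact absurd h2 (by norm_num)
  · have := Fintype.ofFinite F
    have hT : #T ≤ 4 := (card_le_univ T).trans (by rwa [← Nat.card_eq_fintype_card])
    simp only [max_le_iff]
    omega

end SmallFields

section Arithmetic

theorem add_le_choose_add {r s : ℕ} (hr : 0 < r) (hs : 0 < s) : r + s ≤ (r + s).choose r := by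
  obtain ⟨r, rfl⟩ := Nat.exists_eq_add_one_of_ne_zero hr.ne'
  induction s with
  | zero => omega
  | succ s ih =>
    rcases Nat.eq_zero_or_pos s with rfl | hs
    · simp
    rw [show r + 1 + (s + 1) = r + 1 + s + 1 by omega, Nat.choose_succ_succ']
    have := Nat.choose_pos (show r ≤ r + 1 + s by omega)
    have := ih hs
    omega

theorem eq_two_and_eq_two_of_pow_le {r s p k : ℕ} (hr : 2 ≤ r) (hs : 2 ≤ s) (hp : 2 ≤ p)
    (h : (r + s).choose r * r.choose 2 * (s - 1) < p ^ k ∨ p ^ (r.choose 2 * (s - 1)) < p ^ k)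
    (hk : p ^ k ≤ r + s) : r = 2 ∧ s = 2 := by
  obtain ⟨r, rfl⟩ := Nat.exists_eq_add_of_le' hr
  obtain ⟨s, rfl⟩ := Nat.exists_eq_add_of_le' hs
  have hc : r + 1 ≤ (r + 2).choose 2 := by
    rw [Nat.choose_succ_succ, Nat.choose_one_right]
    omega
  rw [show s + 2 - 1 = s + 1 by omega] at h
  rcases h with h | h
  · have h1 := add_le_choose_add (r := r + 2) (s := s + 2) (by omega) (by omega)
    have h2 : 1 ≤ (r + 2).choose 2 * (s + 1) := Nat.mul_pos (by omega) (by omega)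
    have h3 := Nat.mul_le_mul h1 h2
    rw [mul_one, ← mul_assoc] at h3
    omega
  · have hNk := (Nat.pow_lt_pow_iff_right (by omega)).1 h
    by_contra hne
    have hN : r + s + 1 ≤ (r + 2).choose 2 * (s + 1) :=
      calc r + s + 1 ≤ (r + 1) * (s + 1) := by nlinarith
        _ ≤ _ := Nat.mul_le_mul_right _ hc
    have h2 : 2 ^ (r + s + 2) ≤ p ^ k :=
      (Nat.pow_le_pow_right (by norm_num) (by omega)).trans (Nat.pow_le_pow_left hp k)
    have h3 : r + s < 2 ^ (r + s) := Nat.lt_two_pow_self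
    rw [pow_add] at h2
    omega

end Arithmetic

end SubspaceDesign

theorem stmt_16_general (r s : ℕ) (hr : 2 ≤ r) (hs : 2 ≤ s) (F : Type*) [Field F]
    (p : ℕ) [CharP F p]
    (hF : ((Nat.choose (r + s) r * Nat.choose r 2 * (s - 1) : ℕ) : Cardinal) < Cardinal.mk F ∨
          ((p ^ (Nat.choose r 2 * (s - 1)) : ℕ) : Cardinal) < Cardinal.mk F) :
    (∃ H : F → Submodule F (Fin (r + s) → F),
      Function.Injective H ∧
      (∀ t : F, finrank F (H t) = r) ∧
      ∀ W : Submodule F (Fin (r + s) → F), finrank F W = s →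
        ∀ T : Finset F,
          ∑ t ∈ T, finrank F (H t ⊓ W : Submodule F (Fin (r + s) → F)) ≤ r * s) ∧
    (∃ G : F → Submodule F (Fin (r + s) → F),
      Function.Injective G ∧
      (∀ t : F, finrank F (G t) = s) ∧
      ∀ V : Submodule F (Fin (r + s) → F), finrank F V = r →
        ∀ T : Finset F,
          ∑ t ∈ T, finrank F (G t ⊓ V : Submodule F (Fin (r + s) → F)) ≤ s * r) := by
  rcases SubspaceDesign.exists_pow_injOn_Iio_or_card_le F (r + s) with
    ⟨γ, hγ⟩ | ⟨hfin, hcard⟩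
  · exact ⟨SubspaceDesign.exists_strong_design (by omega) (by omega) rfl hγ,
      SubspaceDesign.exists_strong_design (by omega) (by omega) (add_comm s r) hγ⟩
  have := Fintype.ofFinite F
  obtain ⟨k, hp, hk⟩ := FiniteField.card F p
  rw [← Nat.cast_card, Nat.card_eq_fintype_card, hk, Nat.cast_lt, Nat.cast_lt] at hF
  obtain ⟨rfl, rfl⟩ := SubspaceDesign.eq_two_and_eq_two_of_pow_le hr hs hp.two_le hF
    (by rwa [← hk, ← Nat.card_eq_fintype_card])
  have hdesign := SubspaceDesign.exists_design_of_card_le_four (F := F) (by omega)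
  exact ⟨hdesign, hdesign⟩

theorem stmt_16 (r s : ℕ) (hr : 2 ≤ r) (hs : 2 ≤ s) (F : Type*) [Field F]
    (p : ℕ) (hp : p.Prime) [CharP F p]
    (hF : ((Nat.choose (r + s) r * Nat.choose r 2 * (s - 1) : ℕ) : Cardinal) < Cardinal.mk F ∨
          ((p ^ (Nat.choose r 2 * (s - 1)) : ℕ) : Cardinal) < Cardinal.mk F) :
    (∃ H : F → Submodule F (Fin (r + s) → F),
      Function.Injective H ∧
      (∀ t : F, finrank F (H t) = r) ∧
      ∀ W : Submodule F (Fin (r + s) → F), finrank F W = s →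
        ∀ T : Finset F,
          ∑ t ∈ T, finrank F (H t ⊓ W : Submodule F (Fin (r + s) → F)) ≤ r * s) ∧
    (∃ G : F → Submodule F (Fin (r + s) → F),
      Function.Injective G ∧
      (∀ t : F, finrank F (G t) = s) ∧
      ∀ V : Submodule F (Fin (r + s) → F), finrank F V = r →
        ∀ T : Finset F,
          ∑ t ∈ T, finrank F (G t ⊓ V : Submodule F (Fin (r + s) → F)) ≤ s * r) :=
  stmt_16_general r s hr hs F p hF
end

section
/- Let r, s be natural numbers with 1 ≤ r and 1 ≤ s, let F be a field with (r·s : Cardinal) < Cardinal.mk F, and let ω ∈ F be such that the map (fun i : Fin (r+s) => ω ^ (i : ℕ)) is injective. For t : F let mom t : Fin (r+s) → F be the moment-curve vector (mom t) i = t ^ (i : ℕ), and define the ω-secant subspaces H : F → Submodule F (Fin (r+s) → F) by H t := ⨆_{n ∈ Finset.range r} Submodule.span F {mom (ω^n · t)} for t ≠ 0, and H 0 := ⨆_{i ∈ Finset.range r} Submodule.span F {Pi.single (i : Fin (r+s)) 1}. Then finrank (H t) = r for every t ∈ F, and the family (H t)_{t ∈ F} is an r-uniform weak (s, r·s) subspace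 design: for every submodule W of Fin (r+s) → F with finrank W = s, the set {t : F | H t ⊓ W ≠ ⊥} is finite with Set.ncard at most r·s. -/
/-!
Put `W` in row echelon form: pivots `p₀ < ⋯ < p_{s-1}` and vectors `b_k ∈ W` with
`b_k (p_k) = 1` and `b_k j = 0` for `j > p_k`. For `t ≠ 0`, `H t ⊓ W ≠ ⊥` means that the
vectors `moment (ω ^ n * t)` and `b_k` are linearly dependent. Dividing coordinate `i` by `t ^ i`
and multiplying `b_k` by `t ^ p_k` turns them into the evaluation at `t` of the polynomial rows
`(ω ^ (i * n))_i` and `(b_k i * X ^ (p_k - i))_i`, so every bad `t ≠ 0` is a root of the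
determinant `Q` of these rows. At `X = 0` the rows become `(ω ^ (i * n))_i` and the unit vectors
`e_{p_k}`; they are independent because a polynomial of degree `< r` vanishing at the `r`
distinct points `ω ^ i`, `i` not a pivot, is zero. Hence `Q ≠ 0` and `0` is not a root. The
Leibniz expansion gives `deg Q ≤ ∑ k, (p_k - k) ≤ r * s`, and the bound is strict when some pivot
is `< r`, which is what happens when `t = 0` is bad.
-/

open Module Polynomial

section Echelon

variable {K ι : Type*} [Field K] [LinearOrder ι]

theorem exists_ne_zero_forall_gt_eq_zero [Fintype ι] {M : Type*} [Zero M] {v : ι → M}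
    (hv : v ≠ 0) : ∃ i, v i ≠ 0 ∧ ∀ j, i < j → v j = 0 := by
  classical
  obtain ⟨i, hi, hmax⟩ := (Finset.univ.filter (v · ≠ 0)).exists_max_image id
    (by simpa [Finset.filter_nonempty_iff, Function.ne_iff] using hv)
  refine ⟨i, (Finset.mem_filter.1 hi).2, fun j hij => ?_⟩
  by_contra hj
  exact (hmax j (by simpa using hj)).not_gt hij

structure EchelonBasis (W : Submodule K (ι → K)) (s : ℕ) where
  pivot : Fin s ↪o ι
  vec : Fin s → ι → K
  vec_mem : ∀ k, vec k ∈ W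
  vec_pivot : ∀ k, vec k (pivot k) = 1
  vec_eq_zero_of_pivot_lt : ∀ k j, pivot k < j → vec k j = 0
  exists_pivot_ne_zero : ∀ v ∈ W, v ≠ 0 → ∃ k, v (pivot k) ≠ 0

theorem exists_echelonBasis [Fintype ι] (W : Submodule K (ι → K)) :
    ∃ s, Nonempty (EchelonBasis W s) := by
  classical
  let P := Finset.univ.filter fun i => ∃ v ∈ W, v i ≠ 0 ∧ ∀ j, i < j → v j = 0
  have hnormalize : ∀ i ∈ P, ∃ v ∈ W, v i = 1 ∧ ∀ j, i < j → v j = 0 := by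
    intro i hi
    obtain ⟨v, hvW, hvi, hv⟩ := (Finset.mem_filter.1 hi).2
    refine ⟨(v i)⁻¹ • v, W.smul_mem _ hvW, inv_mul_cancel₀ hvi, fun j hj => ?_⟩
    simp [hv j hj]
  let pivot := P.orderEmbOfFin rfl
  choose vec hvec using fun k => hnormalize (pivot k) (P.orderEmbOfFin_mem rfl k)
  refine ⟨P.card, ⟨pivot, vec, fun k => (hvec k).1, fun k => (hvec k).2.1, fun k => (hvec k).2.2,
    fun v hvW hv => ?_⟩⟩
  obtain ⟨i, hvi, hv⟩ := exists_ne_zero_forall_gt_eq_zero hv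
  have hiP : i ∈ Set.range pivot := by
    rw [Finset.range_orderEmbOfFin]
    exact Finset.mem_filter.2 ⟨Finset.mem_univ i, v, hvW, hvi, hv⟩
  obtain ⟨k, rfl⟩ := hiP
  exact ⟨k, hvi⟩

namespace EchelonBasis

variable {W : Submodule K (ι → K)} {s : ℕ} (E : EchelonBasis W s)

theorem linearIndependent_vec : LinearIndependent K E.vec := by
  let B : Matrix (Fin s) (Fin s) K := Matrix.of fun k l => E.vec k (E.pivot l)
  have hB : B.IsLowerTriangular := fun k l hkl =>
    E.vec_eq_zero_of_pivot_lt k _ (E.pivot.strictMono hkl)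
  have hdet : B.det = 1 := by
    rw [Matrix.det_of_isLowerTriangular B hB]
    exact Finset.prod_eq_one fun k _ => E.vec_pivot k
  refine LinearIndependent.of_comp (LinearMap.funLeft K K E.pivot) ?_
  exact Matrix.linearIndependent_rows_iff_isUnit.2
    ((Matrix.isUnit_iff_isUnit_det B).2 (hdet ▸ isUnit_one))

theorem span_vec_le : Submodule.span K (Set.range E.vec) ≤ W :=
  Submodule.span_le.2 (Set.range_subset_iff.2 E.vec_mem)

theorem finrank_eq [Fintype ι] (E : EchelonBasis W s) : finrank K W = s := by
  refine le_antisymm ?_ ?_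
  · have hinj : Function.Injective ((LinearMap.funLeft K K E.pivot).comp W.subtype) := by
      rw [← LinearMap.ker_eq_bot, Submodule.eq_bot_iff]
      intro v hv
      by_contra hv0
      obtain ⟨k, hk⟩ := E.exists_pivot_ne_zero v v.2 (by simpa using hv0)
      exact hk (congrFun hv k)
    simpa using LinearMap.finrank_le_finrank_of_injective hinj
  · simpa [finrank_span_eq_card E.linearIndependent_vec]
      using Submodule.finrank_mono E.span_vec_le

theorem span_vec [Fintype ι] : Submodule.span K (Set.range E.vec) = W := by
  refine Submodule.eq_of_le_of_finrank_eq E.span_vec_le ?_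
  rw [finrank_span_eq_card E.linearIndependent_vec, E.finrank_eq, Fintype.card_fin]

end EchelonBasis

end Echelon

theorem iSup_mem_range_span_singleton {R M : Type*} [Semiring R] [AddCommMonoid M] [Module R M]
    (f : ℕ → M) (r : ℕ) :
    ⨆ n ∈ Finset.range r, Submodule.span R {f n} =
      Submodule.span R (Set.range fun n : Fin r => f n) := by
  rw [← Submodule.span_iUnion₂]
  congr 1
  ext v
  simp [Fin.exists_iff, eq_comm]

theorem iSup_val_lt_span_singleton {R M : Type*} [Semiring R] [AddCommMonoid M] [Module R M]
    {m r : ℕ} (h : r ≤ m) (f : Fin m → M) :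
    ⨆ i : Fin m, ⨆ _ : (i : ℕ) < r, Submodule.span R {f i} =
      Submodule.span R (Set.range fun n : Fin r => f (Fin.castLE h n)) := by
  rw [← Submodule.span_iUnion₂]
  congr 1
  ext v
  simp only [Set.mem_iUnion, Set.mem_singleton_iff, Set.mem_range, exists_prop]
  constructor
  · rintro ⟨i, hi, rfl⟩
    exact ⟨⟨i, hi⟩, rfl⟩
  · rintro ⟨n, rfl⟩
    exact ⟨_, n.isLt, rfl⟩

section SecantSpaces

variable {K : Type*} [Field K]

def moment (m : ℕ) (t : K) : Fin m → K := fun i => t ^ (i : ℕ)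

theorem linearIndependent_moment {m r : ℕ} (h : r ≤ m) {x : Fin r → K}
    (hx : Function.Injective x) : LinearIndependent K fun n => moment m (x n) := by
  refine LinearIndependent.of_comp (LinearMap.funLeft K K (Fin.castLE h)) ?_
  exact Matrix.linearIndependent_rows_iff_isUnit.2 ((Matrix.isUnit_iff_isUnit_det _).2
    (Matrix.det_vandermonde_ne_zero_iff.2 hx).isUnit)

theorem finrank_iSup_span_single {m r : ℕ} (h : r ≤ m) :
    finrank K ↥(⨆ i : Fin m, ⨆ _ : (i : ℕ) < r, Submodule.span K {Pi.single i (1 : K)}) = r := by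
  rw [iSup_val_lt_span_singleton h, finrank_span_eq_card, Fintype.card_fin]
  exact (Pi.linearIndependent_single_one (Fin m) K).comp _ (Fin.castLE_injective h)

theorem val_lt_of_mem_iSup_span_single {m r : ℕ} {v : Fin m → K}
    (hv : v ∈ ⨆ i : Fin m, ⨆ _ : (i : ℕ) < r, Submodule.span K {Pi.single i (1 : K)})
    {j : Fin m} (hvj : v j ≠ 0) : (j : ℕ) < r := by
  by_contra! hj
  have hle : (⨆ i : Fin m, ⨆ _ : (i : ℕ) < r, Submodule.span K {Pi.single i (1 : K)}) ≤
      LinearMap.ker (LinearMap.proj j) := by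
    refine iSup₂_le fun i hi => ?_
    rw [Submodule.span_singleton_le_iff_mem, LinearMap.mem_ker, LinearMap.proj_apply]
    exact Pi.single_eq_of_ne (fun h => by rw [h] at hj; omega) _
  exact hvj (LinearMap.mem_ker.1 (hle hv))

theorem finrank_span_moment_pow_mul {r s : ℕ} {ω t : K}
    (hω : Function.Injective fun i : Fin (r + s) => ω ^ (i : ℕ)) (ht : t ≠ 0) :
    finrank K (Submodule.span K
      (Set.range fun n : Fin r => moment (r + s) (ω ^ (n : ℕ) * t))) = r := by
  rw [finrank_span_eq_card, Fintype.card_fin]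
  exact linearIndependent_moment (Nat.le_add_right r s)
    ((mul_left_injective₀ ht).comp (hω.comp (Fin.castLE_injective (Nat.le_add_right r s))))

end SecantSpaces

theorem val_le_orderEmbedding_apply {s m : ℕ} (f : Fin s ↪o Fin m) (k : Fin s) :
    (k : ℕ) ≤ f k := by
  have h := Finset.card_le_card (s := (Finset.Iio k).map f.toEmbedding) (t := Finset.Iio (f k))
    (by simp only [Finset.subset_iff, Finset.mem_map, Finset.mem_Iio, forall_exists_index, and_imp]
        rintro _ l hl rfl
        exact f.strictMono hl)
  simpa using h

theorem orderEmbedding_apply_add_le {s m : ℕ} (f : Fin s ↪o Fin m) (k : Fin s) :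
    (f k : ℕ) + s ≤ k + m := by
  have h := Finset.card_le_card (s := (Finset.Ioi k).map f.toEmbedding) (t := Finset.Ioi (f k))
    (by simp only [Finset.subset_iff, Finset.mem_map, Finset.mem_Ioi, forall_exists_index, and_imp]
        rintro _ l hl rfl
        exact f.strictMono hl)
  simp only [Finset.card_map, Fin.card_Ioi] at h
  omega

theorem sum_val_le_sum_val_of_injective {s m : ℕ} {f : Fin s → Fin m}
    (hf : Function.Injective f) : ∑ k : Fin s, (k : ℕ) ≤ ∑ k, (f k : ℕ) := by
  have hsorted : StrictMono (f ∘ Tuple.sort f) :=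
    (Tuple.monotone_sort f).strictMono_of_injective (hf.comp (Tuple.sort f).injective)
  calc ∑ k : Fin s, (k : ℕ) ≤ ∑ k, (f (Tuple.sort f k) : ℕ) :=
        Finset.sum_le_sum fun k _ => val_le_orderEmbedding_apply (.ofStrictMono _ hsorted) k
    _ = ∑ k, (f k : ℕ) := Equiv.sum_comp (Tuple.sort f) fun k => (f k : ℕ)

theorem sum_sub_le_sum_sub_of_injective {s m : ℕ} (f : Fin s ↪o Fin m) {τ : Fin s → Fin m}
    (hτ : Function.Injective τ) (hτf : ∀ k, τ k ≤ f k) :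
    ∑ k, ((f k : ℕ) - τ k) ≤ ∑ k, ((f k : ℕ) - k) := by
  rw [Finset.sum_tsub_distrib (g := fun k => (τ k : ℕ)) _ fun k _ => hτf k,
    Finset.sum_tsub_distrib (g := fun k : Fin s => (k : ℕ)) _
      fun k _ => val_le_orderEmbedding_apply f k]
  exact Nat.sub_le_sub_left (sum_val_le_sum_val_of_injective hτ) _

theorem sum_sub_le_mul {r s : ℕ} (f : Fin s ↪o Fin (r + s)) :
    ∑ k, ((f k : ℕ) - k) ≤ r * s := by
  calc ∑ k, ((f k : ℕ) - k) ≤ ∑ _k : Fin s, r :=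
        Finset.sum_le_sum fun k _ => by have := orderEmbedding_apply_add_le f k; omega
    _ = r * s := by simp [mul_comm]

theorem sum_sub_lt_mul {r s : ℕ} (f : Fin s ↪o Fin (r + s)) {k₀ : Fin s} (hk₀ : (f k₀ : ℕ) < r) :
    ∑ k, ((f k : ℕ) - k) < r * s := by
  calc ∑ k, ((f k : ℕ) - k) < ∑ _k : Fin s, r :=
        Finset.sum_lt_sum (fun k _ => by have := orderEmbedding_apply_add_le f k; omega)
          ⟨k₀, Finset.mem_univ k₀, by omega⟩
    _ = r * s := by simp [mul_comm]

theorem linearIndependent_sumElim_pow_single {K ι κ : Type*} [Field K] [Fintype ι]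
    [DecidableEq ι] [Fintype κ] {r : ℕ} {x : ι → K} (hx : Function.Injective x) {p : κ → ι}
    (hp : Function.Injective p) (hcard : r + Fintype.card κ ≤ Fintype.card ι) :
    LinearIndependent K (Sum.elim (fun (n : Fin r) (i : ι) => x i ^ (n : ℕ))
      fun k => Pi.single (p k) (1 : K)) := by
  classical
  rw [Fintype.linearIndependent_iff]
  intro g hg
  have hg_apply (i : ι) : ∑ n : Fin r, g (.inl n) * x i ^ (n : ℕ) +
      ∑ k, g (.inr k) * (Pi.single (p k) (1 : K) : ι → K) i = 0 := by
    simpa [Fintype.sum_sum_type] using congrFun hg i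
  have hinl (n : Fin r) : g (.inl n) = 0 := by
    let f : K[X] := ∑ n : Fin r, C (g (.inl n)) * X ^ (n : ℕ)
    have hf : f = 0 := by
      refine eq_zero_of_natDegree_lt_card_of_eval_eq_zero f
        (f := fun i : ↥(Set.range p)ᶜ => x i) (hx.comp Subtype.val_injective) ?_ ?_
      · rintro ⟨i, hi⟩
        have hsingle (k : κ) : (Pi.single (p k) (1 : K) : ι → K) i = 0 :=
          Pi.single_eq_of_ne (fun h => hi ⟨k, h.symm⟩) _
        simpa only [f, eval_finsetSum, eval_mul, eval_C, eval_pow, eval_X, hsingle, mul_zero,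
          Finset.sum_const_zero, add_zero] using hg_apply i
      · have hdeg : f.natDegree ≤ r - 1 :=
          natDegree_sum_le_of_forall_le _ _ fun m _ =>
            (natDegree_C_mul_X_pow_le _ _).trans (by have := m.isLt; omega)
        have := n.isLt
        rw [Fintype.card_compl_set, Set.card_range_of_injective hp]
        omega
    simpa [f, finsetSum_coeff, coeff_C_mul_X_pow, Fin.val_inj]
      using congrArg (coeff · n) hf
  have hinr (k : κ) : g (.inr k) = 0 := by
    simpa [hinl, Pi.single_apply, hp.eq_iff] using hg_apply (p k)
  rintro (n | k)
  exacts [hinl n, hinr k]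

section SecantMatrix

variable {K : Type*} [Field K] {r s : ℕ} (ω : K) {W : Submodule K (Fin (r + s) → K)}
  (E : EchelonBasis W s)

theorem eval_det_eq_det_map {n : Type*} [Fintype n] [DecidableEq n] (M : Matrix n n K[X])
    (t : K) : M.det.eval t = (M.map (eval t)).det := by
  simpa using RingHom.map_det (evalRingHom t) M

noncomputable def secantMatrix : Matrix (Fin (r + s)) (Fin (r + s)) K[X] :=
  Matrix.of fun j i => Sum.elim (fun n : Fin r => C ((ω ^ (i : ℕ)) ^ (n : ℕ)))
    (fun k => C (E.vec k i) * X ^ ((E.pivot k : ℕ) - i)) (finSumFinEquiv.symm j)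

theorem secantMatrix_eval_mul_diagonal (t : K) :
    (secantMatrix ω E).map (eval t) * Matrix.diagonal (fun i : Fin (r + s) => t ^ (i : ℕ)) =
      Matrix.diagonal (fun j => Sum.elim 1 (fun k => t ^ (E.pivot k : ℕ))
          (finSumFinEquiv.symm j)) *
        Matrix.of fun j => Sum.elim (fun n : Fin r => moment (r + s) (ω ^ (n : ℕ) * t)) E.vec
          (finSumFinEquiv.symm j) := by
  ext j i
  simp only [Matrix.mul_diagonal, Matrix.diagonal_mul, Matrix.map_apply, secantMatrix,
    Matrix.of_apply]
  rcases finSumFinEquiv.symm j with n | k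
  · simp [moment, mul_pow, pow_right_comm ω]
  · simp only [Sum.elim_inr, eval_mul, eval_C, eval_pow, eval_X]
    rcases le_or_gt (i : ℕ) (E.pivot k) with hi | hi
    · rw [mul_assoc, pow_sub_mul_pow _ hi, mul_comm]
    · simp [E.vec_eq_zero_of_pivot_lt k i hi]

theorem eval_det_secantMatrix_eq_zero {t : K} (ht : t ≠ 0)
    (htW : Submodule.span K (Set.range fun n : Fin r => moment (r + s) (ω ^ (n : ℕ) * t)) ⊓ W ≠
      ⊥) :
    (secantMatrix ω E).det.eval t = 0 := by
  set v := Sum.elim (fun n : Fin r => moment (r + s) (ω ^ (n : ℕ) * t)) E.vec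
  have hv : ¬LinearIndependent K v := fun hv =>
    htW (disjoint_iff.1 (by simpa [v, E.span_vec] using (linearIndependent_sum.1 hv).2.2))
  have hdet : (Matrix.of fun j => v (finSumFinEquiv.symm j)).det = 0 := by
    by_contra hdet
    refine hv ((linearIndependent_equiv finSumFinEquiv.symm).1 ?_)
    exact Matrix.linearIndependent_rows_iff_isUnit.2
      ((Matrix.isUnit_iff_isUnit_det _).2 (isUnit_iff_ne_zero.2 hdet))
  have h := congrArg Matrix.det (secantMatrix_eval_mul_diagonal ω E t)
  rw [Matrix.det_mul, Matrix.det_mul, hdet, mul_zero, Matrix.det_diagonal] at h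
  rw [eval_det_eq_det_map]
  exact (mul_eq_zero.1 h).resolve_right (Finset.prod_ne_zero_iff.2 fun i _ => pow_ne_zero _ ht)

theorem eval_zero_det_secantMatrix_ne_zero
    (hω : Function.Injective fun i : Fin (r + s) => ω ^ (i : ℕ)) :
    (secantMatrix ω E).det.eval 0 ≠ 0 := by
  have hrows : (secantMatrix ω E).map (eval 0) = Matrix.of fun j =>
      Sum.elim (fun (n : Fin r) (i : Fin (r + s)) => (ω ^ (i : ℕ)) ^ (n : ℕ))
        (fun k => Pi.single (E.pivot k) 1) (finSumFinEquiv.symm j) := by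
    ext j i
    simp only [Matrix.map_apply, secantMatrix, Matrix.of_apply]
    rcases finSumFinEquiv.symm j with n | k
    · simp
    · simp only [Sum.elim_inr, eval_mul, eval_C, eval_pow, eval_X]
      rcases lt_trichotomy (i : ℕ) (E.pivot k) with hi | hi | hi
      · simp [zero_pow (Nat.sub_ne_zero_of_lt hi), Fin.ext_iff, hi.ne]
      · simp [Fin.ext hi, E.vec_pivot]
      · simp [E.vec_eq_zero_of_pivot_lt k i hi, Fin.ext_iff, hi.ne']
  have hli := linearIndependent_sumElim_pow_single (r := r) hω E.pivot.injective (by simp)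
  rw [eval_det_eq_det_map, hrows, ← isUnit_iff_ne_zero, ← Matrix.isUnit_iff_isUnit_det,
    ← Matrix.linearIndependent_rows_iff_isUnit]
  exact (linearIndependent_equiv finSumFinEquiv.symm).2 hli

theorem natDegree_det_secantMatrix_le :
    (secantMatrix ω E).det.natDegree ≤ ∑ k, ((E.pivot k : ℕ) - k) := by
  rw [← Matrix.det_transpose, Matrix.det_apply']
  refine natDegree_sum_le_of_forall_le _ _ fun σ _ => ?_
  refine (natDegree_mul_le ..).trans ?_
  simp only [natDegree_intCast, zero_add, Matrix.transpose_apply]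
  by_cases hprod : ∏ j, secantMatrix ω E j (σ j) = 0
  · simp [hprod]
  rw [← ne_eq, Finset.prod_ne_zero_iff] at hprod
  let τ : Fin s → Fin (r + s) := fun k => σ (finSumFinEquiv (.inr k))
  have hentry (k : Fin s) : secantMatrix ω E (finSumFinEquiv (.inr k)) (τ k) =
      C (E.vec k (τ k)) * X ^ ((E.pivot k : ℕ) - τ k) := by
    simp [secantMatrix]
  have hτ : Function.Injective τ := fun a b h => by simpa [τ] using σ.injective h
  have hτ_le (k : Fin s) : τ k ≤ E.pivot k := by
    refine not_lt.1 fun hlt => hprod (finSumFinEquiv (.inr k)) (Finset.mem_univ _) ?_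
    rw [hentry, E.vec_eq_zero_of_pivot_lt k _ hlt, C_0, zero_mul]
  rw [natDegree_prod _ _ hprod, ← Equiv.sum_comp finSumFinEquiv, Fintype.sum_sum_type]
  calc _ ≤ 0 + ∑ k, ((E.pivot k : ℕ) - τ k) :=
        add_le_add (by simp [secantMatrix])
          (Finset.sum_le_sum fun k _ => (hentry k).symm ▸ natDegree_C_mul_X_pow_le _ _)
    _ ≤ _ := (zero_add _).trans_le (sum_sub_le_sum_sub_of_injective E.pivot hτ hτ_le)

end SecantMatrix

theorem finite_and_ncard_le_of_forall_isRoot {K : Type*} [Field K] {p : K[X]}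
    (hp : p.eval 0 ≠ 0) {S : Set K} (hS : ∀ t ∈ S, t ≠ 0 → p.IsRoot t) {N : ℕ}
    (hN : p.natDegree ≤ N) (hN0 : (0 : K) ∈ S → p.natDegree < N) :
    S.Finite ∧ S.ncard ≤ N := by
  classical
  have hp0 : p ≠ 0 := fun h => hp (by simp [h])
  have hroots : p.roots.toFinset.card ≤ p.natDegree :=
    (Multiset.toFinset_card_le _).trans (card_roots' p)
  have hsub : S ⊆ ↑(insert 0 p.roots.toFinset) := fun t ht => by
    rcases eq_or_ne t 0 with rfl | ht0
    · simp
    · exact Finset.mem_insert_of_mem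
        (Multiset.mem_toFinset.2 ((mem_roots hp0).2 (hS t ht ht0)))
  refine ⟨(Finset.finite_toSet _).subset hsub, ?_⟩
  by_cases h0 : (0 : K) ∈ S
  · calc S.ncard ≤ (insert 0 p.roots.toFinset).card :=
          (Set.ncard_le_ncard hsub (Finset.finite_toSet _)).trans_eq (Set.ncard_coe_finset _)
      _ ≤ p.roots.toFinset.card + 1 := Finset.card_insert_le _ _
      _ ≤ N := by have := hN0 h0; omega
  · have hsub' : S ⊆ ↑p.roots.toFinset := fun t ht =>
      Multiset.mem_toFinset.2 ((mem_roots hp0).2 (hS t ht (ne_of_mem_of_not_mem ht h0)))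
    calc S.ncard ≤ p.roots.toFinset.card :=
          (Set.ncard_le_ncard hsub' (Finset.finite_toSet _)).trans_eq (Set.ncard_coe_finset _)
      _ ≤ N := hroots.trans hN

theorem stmt_18_general (r s : ℕ) (F : Type*) [Field F]
    (ω : F) (hω : Function.Injective (fun i : Fin (r + s) => ω ^ (i : ℕ)))
    (mom : F → Fin (r + s) → F) (hmom : ∀ t i, mom t i = t ^ (i : ℕ))
    (H : F → Submodule F (Fin (r + s) → F))
    (hH : ∀ t : F, t ≠ 0 →
      H t = ⨆ n ∈ Finset.range r, Submodule.span F {mom (ω ^ n * t)})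
    (hH0 : H 0 = ⨆ i : Fin (r + s), ⨆ _ : (i : ℕ) < r,
      Submodule.span F {Pi.single i (1 : F)}) :
    (∀ t : F, finrank F (H t) = r) ∧
    ∀ W : Submodule F (Fin (r + s) → F), finrank F W = s →
      {t : F | H t ⊓ W ≠ ⊥}.Finite ∧ Set.ncard {t : F | H t ⊓ W ≠ ⊥} ≤ r * s := by
  obtain rfl : mom = moment (r + s) := funext fun t => funext (hmom t)
  have hH' (t : F) (ht : t ≠ 0) : H t = Submodule.span F
      (Set.range fun n : Fin r => moment (r + s) (ω ^ (n : ℕ) * t)) :=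
    (hH t ht).trans (iSup_mem_range_span_singleton (fun n => moment (r + s) (ω ^ n * t)) r)
  refine ⟨fun t => ?_, fun W hW => ?_⟩
  · rcases eq_or_ne t 0 with rfl | ht
    · rw [hH0, finrank_iSup_span_single (Nat.le_add_right r s)]
    · rw [hH' t ht, finrank_span_moment_pow_mul hω ht]
  obtain ⟨s', ⟨E⟩⟩ := exists_echelonBasis W
  obtain rfl : s' = s := E.finrank_eq.symm.trans hW
  refine finite_and_ncard_le_of_forall_isRoot (eval_zero_det_secantMatrix_ne_zero ω E hω)
    (fun t ht ht0 => eval_det_secantMatrix_eq_zero ω E ht0 (hH' t ht0 ▸ ht))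
    ((natDegree_det_secantMatrix_le ω E).trans (sum_sub_le_mul E.pivot)) fun h0 => ?_
  obtain ⟨v, hv, hv0⟩ := (Submodule.ne_bot_iff _).1 h0
  obtain ⟨hvH, hvW⟩ := Submodule.mem_inf.1 hv
  obtain ⟨k, hk⟩ := E.exists_pivot_ne_zero v hvW hv0
  exact (natDegree_det_secantMatrix_le ω E).trans_lt
    (sum_sub_lt_mul E.pivot (val_lt_of_mem_iSup_span_single (hH0 ▸ hvH) hk))

theorem stmt_18 (r s : ℕ) (hr : 1 ≤ r) (hs : 1 ≤ s) (F : Type*) [Field F]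
    (hF : ((r * s : ℕ) : Cardinal) < Cardinal.mk F)
    (ω : F) (hω : Function.Injective (fun i : Fin (r + s) => ω ^ (i : ℕ)))
    (mom : F → Fin (r + s) → F) (hmom : ∀ t i, mom t i = t ^ (i : ℕ))
    (H : F → Submodule F (Fin (r + s) → F))
    (hH : ∀ t : F, t ≠ 0 →
      H t = ⨆ n ∈ Finset.range r, Submodule.span F {mom (ω ^ n * t)})
    (hH0 : H 0 = ⨆ i : Fin (r + s), ⨆ _ : (i : ℕ) < r,
      Submodule.span F {Pi.single i (1 : F)}) :
    (∀ t : F, finrank F (H t) = r) ∧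
    ∀ W : Submodule F (Fin (r + s) → F), finrank F W = s →
      {t : F | H t ⊓ W ≠ ⊥}.Finite ∧ Set.ncard {t : F | H t ⊓ W ≠ ⊥} ≤ r * s :=
  stmt_18_general r s F ω hω mom hmom H hH hH0
end
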